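/- arXiv:2508.17915 — 10 statements merged into one kernel-verified Lean document; each statement's English description precedes it below -/
import Mathlib

section
/- Let a ≥ 1 and d ≥ 1 be integers, and let T_a be the (2a+1)×(2a+1) integer matrix with rows and columns indexed by 0,…,2a defined by T_a(i,j) = 2 if i+j < a or i+j > 3a, T_a(i,j) = 1 if |i−a| + |j−a| ≤ a, and T_a(i,j) = 0 otherwise. Then the (0,0)-entry of T_a^{d+1} equals (2a+1)^d + 2^d · F(d, a−1). -/
/-!
Write `T_a = J + E M Eᵀ`, where `J` is the all-ones matrix, `M x y = [x + y < a]` is the `a × a`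
transfer matrix of the Fibonacci polytope, and the columns of `E` are `e_x - e_{2a-x}`. These
columns are orthogonal to the all-ones vector and to each other, with squared norm `2`, so
`T_a ^ (d+1) = (2a+1)^d J + 2^d E M^(d+1) Eᵀ`. The `(0,0)` entry of `E N Eᵀ` is `N 0 0`, and
`(M^(d+1)) 0 0` counts the walks `0, x_1, …, x_d, 0` whose consecutive sums stay below `a`, i.e.
the lattice points of the `(a-1)`-th dilate of the `d`-dimensional Fibonacci polytope.
-/

/-- `FibPts d k` : the number of integer points `x = (x_1, …, x_d)` with
`0 ≤ x_i ≤ k` and `x_i + x_{i+1} ≤ k` for consecutive indices, i.e. the number of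
lattice points in the `k`-th dilation of the `d`-dimensional Fibonacci polytope. -/
noncomputable def FibPts (d k : ℕ) : ℕ :=
  Set.ncard {x : Fin d → ℤ | (∀ i, 0 ≤ x i ∧ x i ≤ (k : ℤ)) ∧
    ∀ i j : Fin d, (j : ℕ) = (i : ℕ) + 1 → x i + x j ≤ (k : ℤ)}

/-- The matrix `T_a` of size `(2a+1) × (2a+1)`. -/
def Tmat (a : ℕ) : Matrix (Fin (2*a+1)) (Fin (2*a+1)) ℤ :=
  Matrix.of fun i j =>
    if (i : ℕ) + (j : ℕ) < a ∨ 3*a < (i : ℕ) + (j : ℕ) then 2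
    else if |(i : ℤ) - (a : ℤ)| + |(j : ℤ) - (a : ℤ)| ≤ (a : ℤ) then 1
    else 0

open Matrix Finset

namespace Matrix

variable {l m n R : Type*} [Fintype n] [CommSemiring R]

theorem mul_mul_transpose_apply_eq_mulVec (A : Matrix l n R) (N : Matrix n n R) (i j : l) :
    (A * N * Aᵀ) i j = (A *ᵥ fun y => (A *ᵥ fun x => N x y) i) j :=
  sum_congr rfl fun _ _ => mul_comm _ _

theorem add_mul_mul_transpose_pow_succ [Fintype m] [DecidableEq m] [DecidableEq n]
    {J : Matrix m m R} {E : Matrix m n R} {s c : R}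
    (hJ : J * J = s • J) (hE : Eᵀ * E = c • 1) (hJE : J * E = 0) (hEJ : Eᵀ * J = 0)
    (M : Matrix n n R) (k : ℕ) :
    (J + E * M * Eᵀ) ^ (k + 1) = s ^ k • J + c ^ k • (E * M ^ (k + 1) * Eᵀ) := by
  induction k with
  | zero => simp
  | succ k ih =>
    have hJ_left : J * (E * M ^ (k + 1) * Eᵀ) = 0 := by
      rw [← Matrix.mul_assoc, ← Matrix.mul_assoc, hJE, Matrix.zero_mul, Matrix.zero_mul]
    have hJ_right : E * M * Eᵀ * J = 0 := by rw [Matrix.mul_assoc, hEJ, Matrix.mul_zero]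
    have hE_mid : E * M * Eᵀ * (E * M ^ (k + 1) * Eᵀ) = c • (E * M ^ (k + 2) * Eᵀ) := by
      calc E * M * Eᵀ * (E * M ^ (k + 1) * Eᵀ) = E * M * (Eᵀ * E) * M ^ (k + 1) * Eᵀ := by
            simp only [Matrix.mul_assoc]
        _ = c • (E * M ^ (k + 2) * Eᵀ) := by
            rw [hE, Matrix.mul_smul, Matrix.mul_one, Matrix.smul_mul, Matrix.smul_mul,
              Matrix.mul_assoc E M, ← pow_succ']
    rw [pow_succ', ih, add_mul, Matrix.mul_add, Matrix.mul_add, Matrix.mul_smul,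
      Matrix.mul_smul, Matrix.mul_smul, Matrix.mul_smul, hJ, hJ_left, hJ_right, hE_mid]
    simp only [smul_zero, add_zero, zero_add, smul_smul, pow_succ]

end Matrix

theorem Fin.sum_ite_val_eq {M : Type*} [AddCommMonoid M] {N : ℕ} (c : ℕ) (f : Fin N → M) :
    ∑ i : Fin N, (if (i : ℕ) = c then f i else 0) = if h : c < N then f ⟨c, h⟩ else 0 := by
  split_ifs with h
  · simp_rw [show ∀ i : Fin N, (i : ℕ) = c ↔ i = ⟨c, h⟩ from
      fun _ => Fin.ext_iff (b := ⟨c, h⟩) |>.symm, sum_ite_eq', if_pos (mem_univ _)]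
  · exact sum_eq_zero fun i _ => if_neg (by omega)

def allOnes (n : Type*) : Matrix n n ℤ := of fun _ _ => 1

theorem allOnes_transpose (n : Type*) : (allOnes n)ᵀ = allOnes n := rfl

theorem allOnes_mul_self (n : Type*) [Fintype n] :
    allOnes n * allOnes n = (Fintype.card n : ℤ) • allOnes n := by
  ext i j
  simp [allOnes, mul_apply]

def fibMat (a : ℕ) : Matrix (Fin a) (Fin a) ℤ := of fun x y => if (x : ℕ) + y < a then 1 else 0

def reflMat (a : ℕ) : Matrix (Fin (2 * a + 1)) (Fin a) ℤ :=
  of fun i x => (if (i : ℕ) = x then 1 else 0) - (if (i : ℕ) + x = 2 * a then 1 else 0)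

namespace reflMat

variable {a : ℕ}

theorem vecMul_apply (f : Fin (2 * a + 1) → ℤ) (x : Fin a) :
    (f ᵥ* reflMat a) x = f ⟨x, by omega⟩ - f ⟨2 * a - x, by omega⟩ := by
  have hx := x.isLt
  simp only [vecMul, dotProduct, reflMat, of_apply, mul_sub, mul_ite, mul_one, mul_zero,
    sum_sub_distrib]
  simp_rw [show ∀ i : Fin (2 * a + 1), (i : ℕ) + x = 2 * a ↔ (i : ℕ) = 2 * a - x by omega,
    Fin.sum_ite_val_eq, dif_pos (show (x : ℕ) < 2 * a + 1 by omega),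
    dif_pos (show 2 * a - x < 2 * a + 1 by omega)]

theorem mulVec_apply (g : Fin a → ℤ) (i : Fin (2 * a + 1)) :
    (reflMat a *ᵥ g) i = (if h : (i : ℕ) < a then g ⟨i, h⟩ else 0) -
      (if h : a < (i : ℕ) then g ⟨2 * a - i, by omega⟩ else 0) := by
  have hi := i.isLt
  simp only [mulVec, dotProduct, reflMat, of_apply, sub_mul, ite_mul, one_mul, zero_mul,
    sum_sub_distrib]
  simp_rw [eq_comm (a := (i : ℕ)),
    show ∀ x : Fin a, (i : ℕ) + x = 2 * a ↔ (x : ℕ) = 2 * a - i by omega, Fin.sum_ite_val_eq]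
  congr 1
  by_cases h : a < (i : ℕ)
  · rw [dif_pos h, dif_pos (by omega)]
  · rw [dif_neg h, dif_neg (by omega)]

theorem transpose_mul_self : (reflMat a)ᵀ * reflMat a = (2 : ℤ) • 1 := by
  ext x y
  change ((fun i => reflMat a i x) ᵥ* reflMat a) y = _
  have := x.isLt
  rw [vecMul_apply]
  simp only [reflMat, of_apply, Matrix.smul_apply, one_apply, Fin.ext_iff, smul_eq_mul]
  split_ifs <;> omega

theorem allOnes_mul : allOnes (Fin (2 * a + 1)) * reflMat a = 0 := by
  ext i x
  change (1 ᵥ* reflMat a) x = 0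
  rw [vecMul_apply, Pi.one_apply, Pi.one_apply, sub_self]

theorem transpose_mul_allOnes : (reflMat a)ᵀ * allOnes (Fin (2 * a + 1)) = 0 := by
  rw [← allOnes_transpose, ← transpose_mul, allOnes_mul, transpose_zero]

theorem mul_mul_transpose_apply_zero_zero [NeZero a] (N : Matrix (Fin a) (Fin a) ℤ) :
    (reflMat a * N * (reflMat a)ᵀ) 0 0 = N 0 0 := by
  rw [mul_mul_transpose_apply_eq_mulVec]
  simp [mulVec_apply, Nat.pos_of_neZero a]

end reflMat

theorem abs_sub_add_abs_sub_le_iff (a i j : ℕ) :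
    |(i : ℤ) - a| + |(j : ℤ) - a| ≤ a ↔ a ≤ i + j ∧ i + j ≤ 3 * a ∧ j ≤ a + i ∧ i ≤ a + j := by
  rcases abs_cases ((i : ℤ) - a) with ⟨hi, _⟩ | ⟨hi, _⟩ <;>
    rcases abs_cases ((j : ℤ) - a) with ⟨hj, _⟩ | ⟨hj, _⟩ <;>
    rw [hi, hj] <;> omega

theorem Tmat_eq_allOnes_add (a : ℕ) :
    Tmat a = allOnes (Fin (2 * a + 1)) + reflMat a * fibMat a * (reflMat a)ᵀ := by
  ext i j
  rw [Matrix.add_apply, mul_mul_transpose_apply_eq_mulVec]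
  have := i.isLt
  have := j.isLt
  simp only [reflMat.mulVec_apply, Tmat, fibMat, allOnes, of_apply, abs_sub_add_abs_sub_le_iff]
  split_ifs <;> omega

section Walks

variable {α : Type*} [Fintype α]

theorem card_filter_pi_fin_succ {d : ℕ} (P : (Fin (d + 1) → α) → Prop) [DecidablePred P] :
    #{x | P x} = ∑ y, #{x : Fin d → α | P (Fin.cons y x)} := by
  simp only [card_filter]
  rw [← (Fin.consEquiv fun _ => α).sum_comp, Fintype.sum_prod_type]
  rfl

theorem pow_mulVec_one_apply_eq_card_isChain [DecidableEq α] {R : Type*} [Semiring R]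
    (r : α → α → Prop) [DecidableRel r] (d : ℕ) (z : α) :
    ((of fun x y => if r x y then (1 : R) else 0) ^ d *ᵥ 1) z =
      #{x : Fin d → α | (z :: List.ofFn x).IsChain r} := by
  induction d generalizing z with
  | zero => simp
  | succ d ih =>
    rw [pow_succ', ← mulVec_mulVec, card_filter_pi_fin_succ, Nat.cast_sum]
    refine sum_congr rfl fun y _ => ?_
    simp only [ih, of_apply, ite_mul, one_mul, zero_mul, List.ofFn_cons, List.isChain_cons_cons]
    split_ifs with h <;> simp [h]

end Walks

theorem FibPts_eq_card (d k : ℕ) :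
    FibPts d k = #{x : Fin d → Fin (k + 1) |
      (List.ofFn x).IsChain fun u v : Fin (k + 1) => (u : ℕ) + v < k + 1} := by
  have h_inj : Function.Injective fun (x : Fin d → Fin (k + 1)) i => ((x i : ℕ) : ℤ) :=
    fun x x' h => funext fun i => Fin.ext (by simpa using congrFun h i)
  rw [FibPts, ← Set.ncard_coe_finset, ← Set.ncard_image_of_injective _ h_inj]
  congr 1
  ext y
  simp only [Set.mem_ofPred_eq, coe_filter, mem_univ, true_and, Set.mem_image, List.isChain_ofFn]
  constructor
  · rintro ⟨h_box, h_cons⟩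
    refine ⟨fun i => ⟨(y i).toNat, by have := h_box i; omega⟩, fun i hi => ?_,
      funext fun i => by have := h_box i; simp; omega⟩
    have := h_cons ⟨i, by omega⟩ ⟨i + 1, hi⟩ rfl
    have := h_box ⟨i, by omega⟩
    have := h_box ⟨i + 1, hi⟩
    simp only
    omega
  · rintro ⟨x, h_chain, rfl⟩
    refine ⟨fun i => ⟨by positivity, by have := x i |>.isLt; simp only; omega⟩,
      fun ⟨i, _⟩ ⟨j, hj⟩ hij => ?_⟩
    subst hij
    have := h_chain i hj
    simp only at this ⊢
    omega

theorem fibMat_pow_succ_apply_zero_zero (d k : ℕ) :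
    (fibMat (k + 1) ^ (d + 1)) 0 0 = FibPts d k := by
  have h_col : (fun y => fibMat (k + 1) y 0) = 1 := by
    ext y
    simp [fibMat, Nat.lt_succ_iff.mp y.isLt]
  change (fibMat (k + 1) ^ d *ᵥ fun y => fibMat (k + 1) y 0) 0 = _
  rw [h_col, fibMat, pow_mulVec_one_apply_eq_card_isChain, FibPts_eq_card]
  congr 1
  refine congrArg card (filter_congr fun x _ => ?_)
  simp only [List.isChain_cons, and_iff_right_iff_imp]
  intro _ y _
  simp [y.isLt]

theorem stmt0_general (a d : ℕ) (ha : 1 ≤ a) :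
    (Tmat a ^ (d+1)) 0 0 = (2*(a : ℤ)+1)^d + 2^d * (FibPts d (a-1) : ℤ) := by
  obtain ⟨k, rfl⟩ : ∃ k, a = k + 1 := ⟨a - 1, by omega⟩
  rw [Tmat_eq_allOnes_add, add_mul_mul_transpose_pow_succ (allOnes_mul_self _)
    reflMat.transpose_mul_self reflMat.allOnes_mul reflMat.transpose_mul_allOnes,
    Matrix.add_apply, Matrix.smul_apply, Matrix.smul_apply,
    reflMat.mul_mul_transpose_apply_zero_zero, fibMat_pow_succ_apply_zero_zero,
    Fintype.card_fin, Nat.add_sub_cancel]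
  simp [allOnes]

theorem stmt0 (a d : ℕ) (ha : 1 ≤ a) (hd : 1 ≤ d) :
    (Tmat a ^ (d+1)) 0 0 = (2*(a : ℤ)+1)^d + 2^d * (FibPts d (a-1) : ℤ) :=
  stmt0_general a d ha
end

section
/- Let a ≥ 1 and d ≥ 2 be integers, and let N_a be the (2a+1)×(2a+1) integer matrix with rows and columns indexed by 0,…,2a defined by N_a(i,j) = 1 if |i−a| + |j−a| ≤ a and N_a(i,j) = 0 otherwise. Then the (0,0)-entry of N_a^{d+1} equals E(d−2, a). -/
/-!
Row and column `0` of `N_a` are the indicator of the centre `a`, so the `(0,0)` entry of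
`N_a ^ (d+1)` is the `(a,a)` entry of `N_a ^ (d-1)`, which counts closed walks of length `d-1`
at the centre in the graph `|i-a| + |j-a| ≤ a`. The centre is adjacent to every vertex, so such
walks are arbitrary chains of `d-2` inner vertices, and shifting the vertices by `-a` turns
these chains into the lattice points counted by `E(d-2, a)`.
-/

/-- `ExtFibPts d k` : the number of integer points `x = (x_1, …, x_d)` with
`|x_i| ≤ k` and `|x_i| + |x_{i+1}| ≤ k` for consecutive indices, i.e. the number of
lattice points in the `k`-th dilation of the `d`-dimensional extended Fibonacci polytope. -/
noncomputable def ExtFibPts (d k : ℕ) : ℕ :=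
  Set.ncard {x : Fin d → ℤ | (∀ i, |x i| ≤ (k : ℤ)) ∧
    ∀ i j : Fin d, (j : ℕ) = (i : ℕ) + 1 → |x i| + |x j| ≤ (k : ℤ)}

/-- The matrix `N_a` of size `(2a+1) × (2a+1)`: entry `1` in the middle rhombus
`|i−a| + |j−a| ≤ a`, and `0` otherwise. -/
def Nmat (a : ℕ) : Matrix (Fin (2*a+1)) (Fin (2*a+1)) ℤ :=
  Matrix.of fun i j =>
    if |(i : ℤ) - (a : ℤ)| + |(j : ℤ) - (a : ℤ)| ≤ (a : ℤ) then 1 else 0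

open Finset Matrix

theorem Matrix.pow_succ_apply_eq_card_isChain {ι S : Type*} [Fintype ι] [DecidableEq ι]
    [Semiring S] (R : ι → ι → Prop) [DecidableRel R] (m : ℕ) (i j : ι) :
    ((Matrix.of fun k l => if R k l then (1 : S) else 0) ^ (m + 1)) i j =
      (#{x : Fin m → ι | (i :: (List.ofFn x ++ [j])).IsChain R} : S) := by
  induction m generalizing i with
  | zero => by_cases h : R i j <;> simp [h]
  | succ m ih =>
    rw [pow_succ', mul_apply, Finset.natCast_card_filter,
      ← (Fin.consEquiv fun _ => ι).sum_comp, Fintype.sum_prod_type]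
    refine Finset.sum_congr rfl fun r _ => ?_
    simp only [ih, Finset.natCast_card_filter, Finset.mul_sum, of_apply, Fin.consEquiv_apply,
      List.ofFn_succ, Fin.cons_zero, Fin.cons_succ, List.cons_append, List.isChain_cons_cons,
      ite_and, ite_mul, one_mul, zero_mul]

theorem Matrix.mul_mul_apply_of_eq_ite {ι S : Type*} [Fintype ι] [DecidableEq ι] [Semiring S]
    {M A N : Matrix ι ι S} {i k c : ι} (hM : ∀ j, M i j = if j = c then 1 else 0)
    (hN : ∀ j, N j k = if j = c then 1 else 0) :
    (M * A * N) i k = A c c := by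
  simp [mul_apply, hM, hN]

theorem List.isChain_cons_append_singleton_iff_of_forall {α : Type*} {R : α → α → Prop} {c : α}
    (hl : ∀ x, R c x) (hr : ∀ x, R x c) (l : List α) :
    (c :: (l ++ [c])).IsChain R ↔ l.IsChain R := by
  simp [List.isChain_cons, List.isChain_append, hl, hr]

theorem List.isChain_ofFn_iff_forall_val_eq_succ {α : Type*} {n : ℕ} {f : Fin n → α}
    {r : α → α → Prop} :
    (List.ofFn f).IsChain r ↔ ∀ i j : Fin n, (j : ℕ) = i + 1 → r (f i) (f j) := by
  rw [List.isChain_ofFn]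
  constructor
  · rintro h i ⟨j, hj⟩ rfl
    exact h i hj
  · exact fun h i hi => h ⟨i, by omega⟩ ⟨i + 1, hi⟩ rfl

namespace Nmat

variable (a : ℕ)

def center : Fin (2 * a + 1) := ⟨a, by omega⟩

def Adj (i j : Fin (2 * a + 1)) : Prop :=
  |(i : ℤ) - a| + |(j : ℤ) - a| ≤ a

instance : DecidableRel (Adj a) := fun _ _ => Int.decLe _ _

theorem eq_of_adj : Nmat a = Matrix.of fun i j => if Adj a i j then 1 else 0 := rfl

variable {a}

theorem abs_sub_le (i : Fin (2 * a + 1)) : |(i : ℤ) - a| ≤ a := by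
  have := i.isLt
  rw [abs_le]
  omega

theorem adj_symm {i j : Fin (2 * a + 1)} : Adj a i j ↔ Adj a j i := by
  rw [Adj, Adj, add_comm]

theorem adj_center_left (j : Fin (2 * a + 1)) : Adj a (center a) j := by
  simpa [Adj, center] using abs_sub_le j

theorem adj_center_right (i : Fin (2 * a + 1)) : Adj a i (center a) :=
  adj_symm.mp (adj_center_left i)

theorem adj_zero_left_iff {j : Fin (2 * a + 1)} : Adj a 0 j ↔ j = center a := by
  simp only [Adj, Fin.val_zero, Nat.cast_zero, zero_sub, abs_neg, Nat.abs_cast, Fin.ext_iff,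
    center]
  constructor
  · intro h
    have h0 : |(j : ℤ) - a| = 0 := le_antisymm (by linarith) (abs_nonneg _)
    rw [abs_eq_zero, sub_eq_zero] at h0
    exact_mod_cast h0
  · intro h
    simp [h]

theorem apply_zero_left (j : Fin (2 * a + 1)) : Nmat a 0 j = if j = center a then 1 else 0 :=
  if_congr adj_zero_left_iff rfl rfl

theorem apply_zero_right (j : Fin (2 * a + 1)) : Nmat a j 0 = if j = center a then 1 else 0 :=
  if_congr (adj_symm.trans adj_zero_left_iff) rfl rfl

theorem exists_sub_eq {y : ℤ} (hy : |y| ≤ a) : ∃ i : Fin (2 * a + 1), (i : ℤ) - a = y := by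
  rw [abs_le] at hy
  exact ⟨⟨(y + a).toNat, by omega⟩, by simp only [Int.ofNat_toNat]; omega⟩

end Nmat

open Nmat in
theorem extFibPts_eq_card_isChain (m a : ℕ) :
    ExtFibPts m a = #{z : Fin m → Fin (2 * a + 1) | (List.ofFn z).IsChain (Adj a)} := by
  have hinj : Function.Injective fun (z : Fin m → Fin (2 * a + 1)) i => (z i : ℤ) - a :=
    fun z w h => funext fun i => Fin.ext (by simpa using congrFun h i)
  rw [ExtFibPts, ← Set.ncard_coe_finset, ← Set.ncard_image_of_injective _ hinj]
  congr 1
  ext x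
  simp only [coe_filter, mem_univ, true_and, List.isChain_ofFn_iff_forall_val_eq_succ,
    Set.mem_ofPred_eq, Set.mem_image]
  constructor
  · rintro ⟨hbound, hchain⟩
    choose z hz using fun i => exists_sub_eq (hbound i)
    refine ⟨z, fun i j hij => ?_, funext hz⟩
    simpa [Adj, hz] using hchain i j hij
  · rintro ⟨z, hchain, rfl⟩
    exact ⟨fun i => abs_sub_le (z i), hchain⟩

theorem stmt2_general (a d : ℕ) (hd : 2 ≤ d) :
    (Nmat a ^ (d+1)) 0 0 = (ExtFibPts (d-2) a : ℤ) := by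
  obtain ⟨m, rfl⟩ : ∃ m, d = m + 2 := ⟨d - 2, by omega⟩
  rw [show m + 2 + 1 = 1 + (m + 1) + 1 by ring, pow_add, pow_add, pow_one,
    mul_mul_apply_of_eq_ite Nmat.apply_zero_left Nmat.apply_zero_right, Nmat.eq_of_adj,
    pow_succ_apply_eq_card_isChain, Nat.add_sub_cancel, extFibPts_eq_card_isChain]
  simp only [List.isChain_cons_append_singleton_iff_of_forall Nmat.adj_center_left
    Nmat.adj_center_right]

theorem stmt2 (a d : ℕ) (ha : 1 ≤ a) (hd : 2 ≤ d) :
    (Nmat a ^ (d+1)) 0 0 = (ExtFibPts (d-2) a : ℤ) :=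
  stmt2_general a d hd
end

section
/- Let d ≥ 2 be an integer. There exist polynomials f, g ∈ ℚ[x], both of degree exactly d, such that for every prime p > 2, writing a = (p−1)/2, one has g(p) ≠ 0 and 1 + (2^d · F(d, a−1)) / ((2a+1)^d − E(d−2, a)) = f(p)/g(p) in ℚ. -/
/-!
Let `N_T(k, c, d)` count the tuples `x ∈ T^d` with `|x_i| + |x_{i+1}| ≤ k` and `|x_0| ≤ c`.
Conditioning on `x_0` gives `N_T(k, c, d + 1) = ∑_{t ∈ T, |t| ≤ c} N_T(k, k - |t|, d)`, so by
Faulhaber's formula `N_T` is a polynomial in `(k, c)` on the wedge `0 ≤ c ≤ k`, both for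
`T = [0, k]` and for `T = [-k, k]`. At `c = k` this makes `FibPts d` and `ExtFibPts e` polynomials
in `k`, of degrees at most `d` and `e` since they are bounded by the number of points of the box.
For `p = 2a + 1` the Hilbert–Kunz expression is then `f(p) / g(p)` with
`g = X^d - E((X - 1)/2)` and `f = g + 2^d F((X - 3)/2)`; both have degree exactly `d` because
`E` has degree at most `d - 2` and `F` has a nonnegative leading coefficient.
-/

open Polynomial Finset

namespace MvPolynomial

variable {R : Type*} [CommSemiring R]

lemma eval_bind₁_fin_two (v : Fin 2 → R) (A B P : MvPolynomial (Fin 2) R) :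
    eval v (bind₁ ![A, B] P) = eval ![eval v A, eval v B] P := by
  refine (eval₂Hom_bind₁ _ _ _ _).trans (congrArg (eval · P) ?_)
  ext i; fin_cases i <;> rfl

lemma eval_polynomial_aeval {σ : Type*} (v : σ → R) (p : MvPolynomial σ R) (q : R[X]) :
    eval v (Polynomial.aeval p q) = q.eval (eval v p) := by
  simpa [coe_aeval_eq_eval] using (Polynomial.aeval_algHom_apply (aeval v) p q).symm

lemma eval_fin_two_monomial (x y a : R) (u : Fin 2 →₀ ℕ) :
    eval ![x, y] (monomial u a) = a * x ^ u 0 * y ^ u 1 := by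
  rw [eval_monomial, Finsupp.prod_fintype _ _ (by simp), Fin.prod_univ_two]
  simp [mul_assoc]

end MvPolynomial

namespace Polynomial

section Growth

variable {𝕜 : Type*} [NormedField 𝕜] [LinearOrder 𝕜] [IsStrictOrderedRing 𝕜] [OrderTopology 𝕜]
  [Archimedean 𝕜] {P : 𝕜[X]}

lemma natDegree_le_of_abs_eval_le {m : ℕ} {B : 𝕜}
    (h : ∀ n : ℕ, |P.eval (n : 𝕜)| ≤ B * (n + 1) ^ m) : P.natDegree ≤ m := by
  by_contra! hm
  have hQ : (X + C 1 : 𝕜[X]) ^ m ≠ 0 := pow_ne_zero _ (X_add_C_ne_zero 1)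
  have hdeg : ((X + C 1 : 𝕜[X]) ^ m).degree < P.degree := by
    rw [degree_pow, degree_X_add_C, nsmul_one, degree_eq_natDegree (ne_zero_of_natDegree_gt hm)]
    exact_mod_cast hm
  obtain ⟨n, hn⟩ := (((abs_div_tendsto_atTop_atTop_of_degree_gt P _ hdeg hQ).comp
    tendsto_natCast_atTop_atTop).eventually_gt_atTop B).exists
  have hpos : (0 : 𝕜) < (n + 1) ^ m := by positivity
  simp only [Function.comp_apply, eval_pow, eval_add, eval_X, eval_C, abs_div,
    abs_of_pos hpos, lt_div_iff₀ hpos] at hn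
  linarith [h n]

lemma leadingCoeff_nonneg_of_eval_nonneg (h : ∀ n : ℕ, 0 ≤ P.eval (n : 𝕜)) :
    0 ≤ P.leadingCoeff := by
  by_contra! hlt
  rcases le_or_gt P.degree 0 with hdeg | hdeg
  · rw [eq_C_of_degree_le_zero hdeg, leadingCoeff_C] at hlt
    have := h 0
    rw [eq_C_of_degree_le_zero hdeg, eval_C] at this
    linarith
  · obtain ⟨n, hn⟩ := (((tendsto_atBot_of_leadingCoeff_nonpos P hdeg hlt.le).comp
      tendsto_natCast_atTop_atTop).eventually_lt_atBot 0).exists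
    exact (h n).not_gt hn

end Growth

variable {R : Type*} [CommRing R] [LinearOrder R] [IsStrictOrderedRing R] {P : R[X]} {d : ℕ}

lemma degree_X_pow_add (hP : P.natDegree ≤ d) (h : 0 ≤ P.coeff d) :
    (X ^ d + P).degree = (d : WithBot ℕ) := by
  refine degree_eq_of_le_of_coeff_ne_zero ?_ ?_
  · exact (degree_add_le _ _).trans (max_le (degree_X_pow_le d) (degree_le_of_natDegree_le hP))
  · rw [coeff_add, coeff_X_pow_self]; positivity

lemma coeff_comp_nonneg {L : R[X]} (hP : P.natDegree ≤ d) (hPlc : 0 ≤ P.leadingCoeff)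
    (hL : L.natDegree = 1) (hLlc : 0 ≤ L.leadingCoeff) : 0 ≤ (P.comp L).coeff d := by
  rcases hP.lt_or_eq with hlt | heq
  · rw [coeff_eq_zero_of_natDegree_lt (by rwa [natDegree_comp, hL, mul_one])]
  · rw [← heq, ← mul_one P.natDegree, ← hL, ← natDegree_comp, coeff_natDegree,
      leadingCoeff_comp (by omega)]
    positivity

end Polynomial

lemma exists_eval_eq_sum_range_pow (j : ℕ) :
    ∃ q : ℚ[X], ∀ n : ℕ, q.eval (n : ℚ) = ∑ m ∈ range n, (m : ℚ) ^ j :=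
  ⟨C (j + 1 : ℚ)⁻¹ * (Polynomial.bernoulli (j + 1) - C (_root_.bernoulli (j + 1))), fun n => by
    rw [eval_mul, eval_sub, eval_C, eval_C, ← sum_range_pow_eq_bernoulli_sub]
    field_simp⟩

lemma exists_eval_eq_sum_range (P : MvPolynomial (Fin 2) ℚ) :
    ∃ Q : MvPolynomial (Fin 2) ℚ, ∀ (x : ℚ) (n : ℕ),
      MvPolynomial.eval ![x, n] Q = ∑ m ∈ range n, MvPolynomial.eval ![x, m] P := by
  induction P using MvPolynomial.induction_on' with
  | monomial u a =>
    obtain ⟨q, hq⟩ := exists_eval_eq_sum_range_pow (u 1)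
    refine ⟨MvPolynomial.C a * MvPolynomial.X 0 ^ u 0 * Polynomial.aeval (MvPolynomial.X 1) q,
      fun x n => ?_⟩
    simp [MvPolynomial.eval_fin_two_monomial, MvPolynomial.eval_polynomial_aeval, hq, mul_sum]
  | add P₁ P₂ h₁ h₂ =>
    obtain ⟨Q₁, hQ₁⟩ := h₁
    obtain ⟨Q₂, hQ₂⟩ := h₂
    exact ⟨Q₁ + Q₂, fun x n => by simp [hQ₁, hQ₂, sum_add_distrib]⟩

-- Tuple counts are polynomial in `(k, c)` only for `c ≤ k`: beyond, the bound `|x_0| ≤ c` is void.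
def IsPolyOnWedge (f : ℤ → ℤ → ℚ) : Prop :=
  ∃ P : MvPolynomial (Fin 2) ℚ, ∀ k c : ℤ, 0 ≤ c → c ≤ k →
    f k c = MvPolynomial.eval ![(k : ℚ), c] P

namespace IsPolyOnWedge

variable {f g : ℤ → ℤ → ℚ}

lemma const (a : ℚ) : IsPolyOnWedge fun _ _ => a :=
  ⟨MvPolynomial.C a, by simp⟩

lemma congr (hf : IsPolyOnWedge f) (h : ∀ k c, 0 ≤ c → c ≤ k → f k c = g k c) :
    IsPolyOnWedge g := by
  obtain ⟨P, hP⟩ := hf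
  exact ⟨P, fun k c hc hck => (h k c hc hck).symm.trans (hP k c hc hck)⟩

lemma sub (hf : IsPolyOnWedge f) (hg : IsPolyOnWedge g) :
    IsPolyOnWedge fun k c => f k c - g k c := by
  obtain ⟨P, hP⟩ := hf
  obtain ⟨Q, hQ⟩ := hg
  exact ⟨P - Q, fun k c hc hck => by simp [hP k c hc hck, hQ k c hc hck]⟩

lemma const_mul (hf : IsPolyOnWedge f) (a : ℚ) : IsPolyOnWedge fun k c => a * f k c := by
  obtain ⟨P, hP⟩ := hf
  exact ⟨MvPolynomial.C a * P, fun k c hc hck => by simp [hP k c hc hck]⟩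

lemma diag (hf : IsPolyOnWedge f) : IsPolyOnWedge fun k _ => f k k := by
  obtain ⟨P, hP⟩ := hf
  refine ⟨MvPolynomial.bind₁ ![MvPolynomial.X 0, MvPolynomial.X 0] P, fun k c hc hck => ?_⟩
  simp [MvPolynomial.eval_bind₁_fin_two, hP k k (hc.trans hck) le_rfl]

lemma sum_Icc (hf : IsPolyOnWedge f) :
    IsPolyOnWedge fun k c => ∑ t ∈ Icc 0 c, f k (k - t) := by
  obtain ⟨P, hP⟩ := hf
  obtain ⟨Q, hQ⟩ := exists_eval_eq_sum_range
    (MvPolynomial.bind₁ ![MvPolynomial.X 0, MvPolynomial.X 0 - MvPolynomial.X 1] P)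
  refine ⟨MvPolynomial.bind₁ ![MvPolynomial.X 0, MvPolynomial.X 1 + 1] Q, fun k c hc hck => ?_⟩
  lift c to ℕ using hc
  calc ∑ t ∈ Icc 0 (c : ℤ), f k (k - t) = ∑ m ∈ range (c + 1), f k (k - m) := by
        rw [Int.Icc_eq_finset_map, sum_map]; simp
    _ = ∑ m ∈ range (c + 1), MvPolynomial.eval ![(k : ℚ), m]
          (MvPolynomial.bind₁ ![MvPolynomial.X 0, MvPolynomial.X 0 - MvPolynomial.X 1] P) :=
        sum_congr rfl fun m hm => by
          rw [mem_range] at hm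
          rw [hP _ _ (by omega) (by omega), MvPolynomial.eval_bind₁_fin_two]
          simp
    _ = _ := by
        rw [← hQ, MvPolynomial.eval_bind₁_fin_two]
        simp

lemma exists_eval_eq_diag (hf : IsPolyOnWedge f) :
    ∃ F : ℚ[X], ∀ n : ℕ, F.eval (n : ℚ) = f n n := by
  obtain ⟨P, hP⟩ := hf
  refine ⟨MvPolynomial.aeval (fun _ => X) P, fun n => ?_⟩
  rw [hP n n (by positivity) le_rfl, MvPolynomial.aeval_def, MvPolynomial.polynomial_eval_eval₂,
    Subsingleton.elim ((evalRingHom (n : ℚ)).comp _) (RingHom.id ℚ)]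
  exact congrArg (MvPolynomial.eval · P) (by ext i; fin_cases i <;> simp)

end IsPolyOnWedge

def IsFibTuple (k c : ℤ) {d : ℕ} (x : Fin d → ℤ) : Prop :=
  (∀ i : Fin d, (i : ℕ) = 0 → |x i| ≤ c) ∧ ∀ i j : Fin d, (j : ℕ) = i + 1 → |x i| + |x j| ≤ k

lemma isFibTuple_cons {k c t : ℤ} {d : ℕ} {y : Fin d → ℤ} :
    IsFibTuple k c (Fin.cons t y : Fin (d + 1) → ℤ) ↔ |t| ≤ c ∧ IsFibTuple k (k - |t|) y := by
  simp [IsFibTuple, Fin.forall_fin_succ, le_sub_iff_add_le']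

open Classical in
noncomputable def fibTupleCount (T : Finset ℤ) (k c : ℤ) (d : ℕ) : ℕ :=
  #{x ∈ Fintype.piFinset fun _ : Fin d => T | IsFibTuple k c x}

lemma fibTupleCount_zero (T : Finset ℤ) (k c : ℤ) : fibTupleCount T k c 0 = 1 := by
  simp [fibTupleCount, IsFibTuple]

lemma fibTupleCount_succ (T : Finset ℤ) (k c : ℤ) (d : ℕ) :
    fibTupleCount T k c (d + 1) = ∑ t ∈ T with |t| ≤ c, fibTupleCount T k (k - |t|) d := by
  classical
  simp only [fibTupleCount, ← card_sigma]
  refine card_nbij' (fun x => ⟨x 0, Fin.tail x⟩) (fun p => Fin.cons p.1 p.2) ?_ ?_ ?_ ?_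
  · intro x hx
    simp only [mem_coe, mem_filter, Fintype.mem_piFinset] at hx
    rw [← Fin.cons_self_tail x, isFibTuple_cons, Fin.forall_fin_succ] at hx
    simp_all [Fin.tail]
  · intro p hp
    simp_all [Fin.forall_fin_succ, isFibTuple_cons]
  · intro x _; simp
  · intro p _; simp

lemma fibTupleCount_le (T : Finset ℤ) (k c : ℤ) (d : ℕ) : fibTupleCount T k c d ≤ #T ^ d := by
  classical
  exact (card_filter_le _ _).trans (by simp)

lemma fibTupleCount_Icc_zero_succ {k c : ℤ} (hc : 0 ≤ c) (hck : c ≤ k) (d : ℕ) :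
    fibTupleCount (Icc 0 k) k c (d + 1) = ∑ t ∈ Icc 0 c, fibTupleCount (Icc 0 k) k (k - t) d := by
  rw [fibTupleCount_succ, show {t ∈ Icc 0 k | |t| ≤ c} = Icc 0 c by ext t; simp [abs_le]; omega]
  exact sum_congr rfl fun t ht => by rw [abs_of_nonneg (mem_Icc.1 ht).1]

lemma fibTupleCount_Icc_neg_succ {k c : ℤ} (hck : c ≤ k) (d : ℕ) :
    fibTupleCount (Icc (-k) k) k c (d + 1) =
      ∑ t ∈ Icc (-c) c, fibTupleCount (Icc (-k) k) k (k - |t|) d := by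
  rw [fibTupleCount_succ,
    show {t ∈ Icc (-k) k | |t| ≤ c} = Icc (-c) c by ext t; simp [abs_le]; omega]

lemma sum_Icc_neg_abs {R : Type*} [CommRing R] (h : ℤ → R) {c : ℤ} (hc : 0 ≤ c) :
    ∑ t ∈ Icc (-c) c, h |t| = 2 * ∑ t ∈ Icc 0 c, h t - h 0 := by
  induction c, hc using Int.leInduction with
  | base => simp; ring
  | succ c hc ih =>
    have hIcc : Icc (-(c + 1)) (c + 1) = insert (-(c + 1)) (insert (c + 1) (Icc (-c) c)) := by
      ext t; simp only [mem_Icc, mem_insert]; omega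
    rw [hIcc, sum_insert (by simp; omega), sum_insert (by simp), ih,
      ← insert_Icc_right_eq_Icc_add_one (by omega), sum_insert (by simp),
      abs_neg, abs_of_nonneg (by omega : (0 : ℤ) ≤ c + 1)]
    ring

lemma isPolyOnWedge_fibTupleCount_Icc_zero (d : ℕ) :
    IsPolyOnWedge fun k c => (fibTupleCount (Icc 0 k) k c d : ℚ) := by
  induction d with
  | zero => exact (IsPolyOnWedge.const 1).congr fun k c _ _ => by simp [fibTupleCount_zero]
  | succ d ih =>
    exact ih.sum_Icc.congr fun k c hc hck => by
      rw [fibTupleCount_Icc_zero_succ hc hck, Nat.cast_sum]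

lemma isPolyOnWedge_fibTupleCount_Icc_neg (d : ℕ) :
    IsPolyOnWedge fun k c => (fibTupleCount (Icc (-k) k) k c d : ℚ) := by
  induction d with
  | zero => exact (IsPolyOnWedge.const 1).congr fun k c _ _ => by simp [fibTupleCount_zero]
  | succ d ih =>
    refine ((ih.sum_Icc.const_mul 2).sub ih.diag).congr fun k c hc hck => ?_
    rw [fibTupleCount_Icc_neg_succ hck, Nat.cast_sum,
      sum_Icc_neg_abs (fun t => (fibTupleCount (Icc (-k) k) k (k - t) d : ℚ)) hc, sub_zero]

lemma fibPts_eq_fibTupleCount (d n : ℕ) : FibPts d n = fibTupleCount (Icc 0 n) n n d := by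
  classical
  rw [FibPts, fibTupleCount, ← Set.ncard_coe_finset]
  congr 1
  ext x
  rw [mem_coe, mem_filter]
  simp only [Set.mem_ofPred_eq, Fintype.mem_piFinset, mem_Icc, IsFibTuple]
  refine and_congr_right fun hx => ?_
  simp only [abs_of_nonneg (hx _).1]
  exact ⟨fun h => ⟨fun i _ => (hx i).2, h⟩, And.right⟩

lemma extFibPts_eq_fibTupleCount (d n : ℕ) : ExtFibPts d n = fibTupleCount (Icc (-n) n) n n d := by
  classical
  rw [ExtFibPts, fibTupleCount, ← Set.ncard_coe_finset]
  congr 1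
  ext x
  rw [mem_coe, mem_filter]
  simp only [Set.mem_ofPred_eq, Fintype.mem_piFinset, mem_Icc, IsFibTuple, ← abs_le]
  exact ⟨fun h => ⟨h.1, fun i _ => h.1 i, h.2⟩, fun h => ⟨h.1, h.2.2⟩⟩

lemma fibPts_le (d n : ℕ) : FibPts d n ≤ (n + 1) ^ d := by
  rw [fibPts_eq_fibTupleCount]
  exact (fibTupleCount_le _ _ _ _).trans_eq (by simp)

lemma extFibPts_le (d n : ℕ) : ExtFibPts d n ≤ (2 * n + 1) ^ d := by
  rw [extFibPts_eq_fibTupleCount]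
  refine (fibTupleCount_le _ _ _ _).trans_eq ?_
  rw [Int.card_Icc]
  congr 1
  omega

lemma exists_fibPts_poly (d : ℕ) : ∃ F : ℚ[X], F.natDegree ≤ d ∧ 0 ≤ F.leadingCoeff ∧
    ∀ n : ℕ, F.eval (n : ℚ) = FibPts d n := by
  obtain ⟨F, hF⟩ := (isPolyOnWedge_fibTupleCount_Icc_zero d).exists_eval_eq_diag
  have hF' (n : ℕ) : F.eval (n : ℚ) = FibPts d n := by rw [hF, fibPts_eq_fibTupleCount]
  refine ⟨F, natDegree_le_of_abs_eval_le (B := 1) fun n => ?_,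
    leadingCoeff_nonneg_of_eval_nonneg fun n => by rw [hF']; positivity, hF'⟩
  rw [hF', Nat.abs_cast, one_mul]
  exact_mod_cast fibPts_le d n

lemma exists_extFibPts_poly (d : ℕ) : ∃ E : ℚ[X], E.natDegree ≤ d ∧
    ∀ n : ℕ, E.eval (n : ℚ) = ExtFibPts d n := by
  obtain ⟨E, hE⟩ := (isPolyOnWedge_fibTupleCount_Icc_neg d).exists_eval_eq_diag
  have hE' (n : ℕ) : E.eval (n : ℚ) = ExtFibPts d n := by rw [hE, extFibPts_eq_fibTupleCount]
  refine ⟨E, natDegree_le_of_abs_eval_le (B := 2 ^ d) fun n => ?_, hE'⟩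
  rw [hE', Nat.abs_cast, ← mul_pow]
  calc (ExtFibPts d n : ℚ) ≤ (2 * n + 1) ^ d := by exact_mod_cast extFibPts_le d n
    _ ≤ (2 * (n + 1)) ^ d := by gcongr; linarith

lemma exists_num_den_polys {d : ℕ} {F E : ℚ[X]} (hF : F.natDegree ≤ d)
    (hFlc : 0 ≤ F.leadingCoeff) (hE : E.natDegree < d) :
    ∃ f g : ℚ[X], f.degree = (d : WithBot ℕ) ∧ g.degree = (d : WithBot ℕ) ∧ ∀ x : ℚ,
      g.eval x = x ^ d - E.eval ((x - 1) / 2) ∧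
      f.eval x = g.eval x + 2 ^ d * F.eval ((x - 3) / 2) := by
  have hL (b : ℚ) : (C 2⁻¹ * (X - C b)).natDegree = 1 ∧ (C 2⁻¹ * (X - C b)).leadingCoeff = 2⁻¹ :=
    ⟨by rw [natDegree_C_mul (by norm_num), natDegree_X_sub_C],
     by rw [leadingCoeff_C_mul_of_isUnit (by norm_num), leadingCoeff_X_sub_C, mul_one]⟩
  set E' := E.comp (C 2⁻¹ * (X - C 1))
  set F' := F.comp (C 2⁻¹ * (X - C 3))
  have hE' : E'.natDegree < d := by rwa [natDegree_comp, (hL 1).1, mul_one]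
  have hF' : F'.natDegree ≤ d := by rwa [natDegree_comp, (hL 3).1, mul_one]
  refine ⟨X ^ d + (C (2 ^ d) * F' - E'), X ^ d + -E', degree_X_pow_add ?_ ?_,
    degree_X_pow_add (by rw [natDegree_neg]; exact hE'.le) ?_, fun x => ?_⟩
  · exact (natDegree_sub_le _ _).trans (max_le ((natDegree_C_mul_le _ _).trans hF') hE'.le)
  · rw [coeff_sub, coeff_C_mul, coeff_eq_zero_of_natDegree_lt hE', sub_zero]
    have := coeff_comp_nonneg hF hFlc (hL 3).1 (by rw [(hL 3).2]; norm_num)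
    positivity
  · rw [coeff_neg, coeff_eq_zero_of_natDegree_lt hE', neg_zero]
  · simp only [E', F', eval_add, eval_neg, eval_sub, eval_mul, eval_C, eval_pow, eval_X, eval_comp]
    constructor <;> ring_nf

theorem stmt5 (d : ℕ) (hd : 2 ≤ d) :
    ∃ f g : Polynomial ℚ, f.degree = (d : WithBot ℕ) ∧ g.degree = (d : WithBot ℕ) ∧
      ∀ p : ℕ, p.Prime → 2 < p → ∀ a : ℕ, a = (p-1)/2 →
        g.eval (p : ℚ) ≠ 0 ∧
        1 + (2^d * (FibPts d (a-1) : ℚ)) / ((2*(a : ℚ)+1)^d - (ExtFibPts (d-2) a : ℚ))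
          = f.eval (p : ℚ) / g.eval (p : ℚ) := by
  obtain ⟨F, hFdeg, hFlc, hF⟩ := exists_fibPts_poly d
  obtain ⟨E, hEdeg, hE⟩ := exists_extFibPts_poly (d - 2)
  obtain ⟨f, g, hf, hg, hfg⟩ := exists_num_den_polys hFdeg hFlc (hEdeg.trans_lt (by omega))
  refine ⟨f, g, hf, hg, fun p hp hp2 a ha => ?_⟩
  have hpa : (p : ℚ) = 2 * a + 1 := by
    have := hp.odd_of_ne_two (by omega)
    exact_mod_cast (by grind : p = 2 * a + 1)
  have hp1 : (1 : ℚ) < 2 * a + 1 := hpa ▸ mod_cast hp.one_lt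
  obtain ⟨hgp, hfp⟩ := hfg (2 * a + 1)
  rw [show (2 * (a : ℚ) + 1 - 1) / 2 = a by ring, hE] at hgp
  rw [show (2 * (a : ℚ) + 1 - 3) / 2 = ((a - 1 : ℕ) : ℚ) by
    push_cast [show 1 ≤ a by omega]; ring, hF] at hfp
  have hden : 0 < (2 * (a : ℚ) + 1) ^ d - ExtFibPts (d - 2) a := by
    rw [sub_pos]
    calc (ExtFibPts (d - 2) a : ℚ) ≤ (2 * a + 1) ^ (d - 2) := by
          exact_mod_cast extFibPts_le (d - 2) a
      _ < (2 * a + 1) ^ d := pow_lt_pow_right₀ hp1 (by omega)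
  rw [hpa, hfp, hgp]
  exact ⟨hden.ne', by field_simp⟩
end

section
/- Let a ≥ 1 and d ≥ 2 be integers. Then (2a+1)^d > E(d−2, a), (2a+1)^{d+1} > E(d−1, a), and in ℚ one has the strict inequality (2^{d+1} · F(d+1, a−1)) / ((2a+1)^{d+1} − E(d−1, a)) < (2^d · F(d, a−1)) / ((2a+1)^d − E(d−2, a)). (Equivalently, for p = 2a+1 an odd prime, the Hilbert–Kunz multiplicity of the quadric satisfies e_HK(A_{p,d}) > e_HK(A_{p,d+1}).) -/
/-!
With `p = 2a + 1`, the box `[-a, a]^m` bounds the extended Fibonacci count, `E(m, a) ≤ p^m`,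
which gives the first two inequalities. Dropping the last coordinate shows
`F(d + 1, a - 1) ≤ a · F(d, a - 1)`, so the left-hand numerator is at most `2a` times the
right-hand one. Since `p - 2a = 1`, the left-hand denominator exceeds `2a` times the right-hand
one by `(p^d - E(d - 1, a)) + 2a · E(d - 2, a) > 0`.
-/

lemma ExtFibPts_le_pow (d k : ℕ) : ExtFibPts d k ≤ (2 * k + 1) ^ d := by
  calc ExtFibPts d k
      ≤ (Fintype.piFinset fun _ : Fin d => Finset.Icc (-(k : ℤ)) k : Set (Fin d → ℤ)).ncard :=
        Set.ncard_le_ncard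
          (fun x hx => by simpa only [Finset.mem_coe, Fintype.mem_piFinset, Finset.mem_Icc, ← abs_le]
            using hx.1)
          (Finset.finite_toSet _)
    _ = (2 * k + 1) ^ d := by
        rw [Set.ncard_coe_finset, Fintype.card_piFinset, Finset.prod_const, Int.card_Icc,
          Finset.card_univ, Fintype.card_fin]
        congr 1; omega

lemma fibPts_set_subset_piFinset (d k : ℕ) :
    {x : Fin d → ℤ | (∀ i, 0 ≤ x i ∧ x i ≤ (k : ℤ)) ∧
      ∀ i j : Fin d, (j : ℕ) = (i : ℕ) + 1 → x i + x j ≤ (k : ℤ)} ⊆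
      (Fintype.piFinset fun _ : Fin d => Finset.Icc 0 (k : ℤ) : Set (Fin d → ℤ)) :=
  fun x hx => by simpa only [Finset.mem_coe, Fintype.mem_piFinset, Finset.mem_Icc] using hx.1

lemma FibPts_pos (d k : ℕ) : 0 < FibPts d k :=
  (Set.ncard_pos ((Finset.finite_toSet _).subset (fibPts_set_subset_piFinset d k))).2
    ⟨0, fun _ => ⟨le_rfl, by positivity⟩, fun _ _ _ => by simp⟩

lemma FibPts_succ_le (d k : ℕ) : FibPts (d + 1) k ≤ (k + 1) * FibPts d k := by
  set T := {x : Fin d → ℤ | (∀ i, 0 ≤ x i ∧ x i ≤ (k : ℤ)) ∧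
      ∀ i j : Fin d, (j : ℕ) = (i : ℕ) + 1 → x i + x j ≤ (k : ℤ)}
  have hT : T.Finite := (Finset.finite_toSet _).subset (fibPts_set_subset_piFinset d k)
  calc FibPts (d + 1) k
      ≤ (T ×ˢ (Finset.Icc 0 (k : ℤ) : Set ℤ)).ncard := by
        refine Set.ncard_le_ncard_of_injOn (fun x => (Fin.init x, x (Fin.last d))) ?_ ?_
          (hT.prod (Finset.finite_toSet _))
        · rintro x ⟨hbox, hadj⟩
          refine ⟨⟨fun i => hbox _, fun i j hij => hadj _ _ ?_⟩, by simpa using hbox (Fin.last d)⟩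
          simpa using hij
        · intro x _ y _ hxy
          simp only [Prod.mk.injEq] at hxy
          rw [← Fin.snoc_init_self x, ← Fin.snoc_init_self y, hxy.1, hxy.2]
    _ = (k + 1) * FibPts d k := by
        rw [Set.ncard_prod, Set.ncard_coe_finset, Int.card_Icc, mul_comm]; simp [FibPts, T]

section OrderedField

variable {K : Type*} [Field K] [LinearOrder K] [IsStrictOrderedRing K]

lemma two_mul_sub_lt_pow_succ_sub {a E E' : K} {m : ℕ} (ha : 0 ≤ a) (hE : 0 ≤ E)
    (hE' : E' < (2 * a + 1) ^ m) :
    2 * a * ((2 * a + 1) ^ m - E) < (2 * a + 1) ^ (m + 1) - E' := by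
  have h : (2 * a + 1) ^ (m + 1) - E' - 2 * a * ((2 * a + 1) ^ m - E)
      = ((2 * a + 1) ^ m - E') + 2 * a * E := by ring
  linarith [mul_nonneg ha hE]

lemma two_pow_succ_mul_div_lt {a F F' E E' : K} {m : ℕ} (ha : 0 ≤ a) (hF : 0 < F)
    (hF' : F' ≤ a * F) (hE : 0 ≤ E) (hE' : E' < (2 * a + 1) ^ m)
    (hD : 0 < (2 * a + 1) ^ m - E) :
    2 ^ (m + 1) * F' / ((2 * a + 1) ^ (m + 1) - E') < 2 ^ m * F / ((2 * a + 1) ^ m - E) := by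
  have hkey := two_mul_sub_lt_pow_succ_sub (m := m) ha hE hE'
  have hD' : 0 < (2 * a + 1) ^ (m + 1) - E' := by nlinarith
  rw [div_lt_div_iff₀ hD' hD]
  have h2F : 0 < 2 ^ m * F := by positivity
  calc 2 ^ (m + 1) * F' * ((2 * a + 1) ^ m - E)
      ≤ 2 ^ (m + 1) * (a * F) * ((2 * a + 1) ^ m - E) := by gcongr
    _ = 2 ^ m * F * (2 * a * ((2 * a + 1) ^ m - E)) := by ring
    _ < 2 ^ m * F * ((2 * a + 1) ^ (m + 1) - E') := mul_lt_mul_of_pos_left hkey h2F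

end OrderedField

theorem stmt7 (a d : ℕ) (ha : 1 ≤ a) (hd : 2 ≤ d) :
    ExtFibPts (d-2) a < (2*a+1)^d ∧
    ExtFibPts (d-1) a < (2*a+1)^(d+1) ∧
    (2^(d+1) * (FibPts (d+1) (a-1) : ℚ)) / ((2*(a : ℚ)+1)^(d+1) - (ExtFibPts (d-1) a : ℚ))
      < (2^d * (FibPts d (a-1) : ℚ)) / ((2*(a : ℚ)+1)^d - (ExtFibPts (d-2) a : ℚ)) := by
  have hp : 1 < 2 * a + 1 := by omega
  have hE₂ : ExtFibPts (d - 2) a < (2 * a + 1) ^ d :=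
    (ExtFibPts_le_pow _ _).trans_lt (Nat.pow_lt_pow_right hp (by omega))
  have hE₁ : ExtFibPts (d - 1) a < (2 * a + 1) ^ d :=
    (ExtFibPts_le_pow _ _).trans_lt (Nat.pow_lt_pow_right hp (by omega))
  have hF : FibPts (d + 1) (a - 1) ≤ a * FibPts d (a - 1) := by
    simpa only [Nat.sub_add_cancel ha] using FibPts_succ_le d (a - 1)
  refine ⟨hE₂, hE₁.trans (Nat.pow_lt_pow_right hp d.lt_succ_self), ?_⟩
  refine two_pow_succ_mul_div_lt (Nat.cast_nonneg a) (by exact_mod_cast FibPts_pos d (a - 1))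
    (by exact_mod_cast hF) (Nat.cast_nonneg _) (by exact_mod_cast hE₁) ?_
  exact sub_pos.mpr (by exact_mod_cast hE₂)
end

section
/- For all integers d ≥ 1 and a ≥ 1, one has F(d+1, a) < (a+1) · F(d, a). -/
/-!
Cutting off the last coordinate maps the lattice points of the `(d+1)`-dimensional polytope
injectively into `[0, a] × (points of the d-dimensional one)`. The map misses
`(a, (0, …, 0, a))`: the last two coordinates of a preimage would both be `a`, violating
`x_d + x_{d+1} ≤ a` as soon as `a ≥ 1`.
-/

open Set

def fibSet (d k : ℕ) : Set (Fin d → ℤ) :=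
  {x : Fin d → ℤ | (∀ i, 0 ≤ x i ∧ x i ≤ (k : ℤ)) ∧
    ∀ i j : Fin d, (j : ℕ) = (i : ℕ) + 1 → x i + x j ≤ (k : ℤ)}

lemma FibPts_eq_ncard_fibSet (d k : ℕ) : FibPts d k = (fibSet d k).ncard := rfl

lemma fibSet_finite (d k : ℕ) : (fibSet d k).Finite :=
  (Set.Finite.pi fun _ : Fin d => Set.finite_Icc (0 : ℤ) k).subset
    fun _ hx i _ => hx.1 i

lemma Int.ncard_Icc_zero_natCast (k : ℕ) : (Icc (0 : ℤ) k).ncard = k + 1 := by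
  rw [← Finset.coe_Icc, ncard_coe_finset, Int.card_Icc]
  omega

lemma mapsTo_snocEquiv_symm_fibSet (d k : ℕ) :
    MapsTo (Fin.snocEquiv fun _ => ℤ).symm (fibSet (d + 1) k) (Icc 0 (k : ℤ) ×ˢ fibSet d k) :=
  fun _ hx =>
    ⟨hx.1 _, fun i => hx.1 _, fun i j hij => hx.2 i.castSucc j.castSucc (by simpa using hij)⟩

lemma single_last_mem_fibSet (n k : ℕ) : Pi.single (Fin.last n) (k : ℤ) ∈ fibSet (n + 1) k := by
  refine ⟨fun i => ?_, fun i j hij => ?_⟩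
  · rcases eq_or_ne i (Fin.last n) with rfl | hi <;> simp [*]
  · have hi : i ≠ Fin.last n := fun h => by have := j.isLt; simp_all
    rw [Pi.single_eq_of_ne hi, zero_add, Pi.single_apply]
    split_ifs <;> omega

lemma notMem_image_snocEquiv_symm_fibSet {n k : ℕ} (hk : 1 ≤ k) :
    ((k : ℤ), Pi.single (Fin.last n) (k : ℤ)) ∉
      (Fin.snocEquiv fun _ => ℤ).symm '' fibSet (n + 2) k := by
  rintro ⟨x, hx, hxe⟩
  simp only [Fin.snocEquiv_symm_apply, Prod.mk.injEq] at hxe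
  obtain ⟨hlast, hinit⟩ := hxe
  have hpen : x (Fin.last n).castSucc = k := by
    simpa [Fin.init] using congrFun hinit (Fin.last n)
  have := hx.2 (Fin.last n).castSucc (Fin.last (n + 1)) (by simp)
  omega

theorem stmt8 (d a : ℕ) (hd : 1 ≤ d) (ha : 1 ≤ a) :
    FibPts (d+1) a < (a+1) * FibPts d a := by
  obtain ⟨n, rfl⟩ : ∃ n, d = n + 1 := ⟨d - 1, by omega⟩
  set e := (Fin.snocEquiv fun _ : Fin (n + 2) => ℤ).symm
  have himage : e '' fibSet (n + 2) a ⊂ Icc 0 (a : ℤ) ×ˢ fibSet (n + 1) a :=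
    ssubset_of_subset_not_subset (mapsTo_snocEquiv_symm_fibSet _ a).image_subset fun h =>
      notMem_image_snocEquiv_symm_fibSet ha
        (h ⟨⟨by positivity, le_rfl⟩, single_last_mem_fibSet n a⟩)
  calc FibPts (n + 2) a = (e '' fibSet (n + 2) a).ncard :=
        (ncard_image_of_injective _ e.injective).symm
    _ < (Icc 0 (a : ℤ) ×ˢ fibSet (n + 1) a).ncard :=
        ncard_lt_ncard himage ((finite_Icc _ _).prod (fibSet_finite _ _))
    _ = (a + 1) * FibPts (n + 1) a := by
        rw [ncard_prod, Int.ncard_Icc_zero_natCast, FibPts_eq_ncard_fibSet]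
end

section
/- For all integers d ≥ 1 and a ≥ 1, one has E(d+1, a) < (2a+1) · E(d, a). -/
/-!
Splitting off the last coordinate embeds the points of dimension `d + 1` into the points of
dimension `d` times the `2a + 1` values `-a, …, a` of that coordinate. The embedding misses the
pair `((0, …, 0, a), a)`, since `|a| + |a| > a`.
-/

open Set

def extFibSet (d k : ℕ) : Set (Fin d → ℤ) :=
  {x | (∀ i, |x i| ≤ (k : ℤ)) ∧ ∀ i j : Fin d, (j : ℕ) = (i : ℕ) + 1 → |x i| + |x j| ≤ (k : ℤ)}

lemma ExtFibPts_eq_ncard (d k : ℕ) : ExtFibPts d k = (extFibSet d k).ncard := rfl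

lemma extFibSet_finite (d k : ℕ) : (extFibSet d k).Finite :=
  (Finite.pi fun _ => finite_Icc (-(k : ℤ)) k).subset fun _ hx i _ => abs_le.mp (hx.1 i)

lemma Int.ncard_Icc (a b : ℤ) : (Icc a b).ncard = (b + 1 - a).toNat := by
  rw [← Finset.coe_Icc, ncard_coe_finset, Int.card_Icc]

lemma mapsTo_snocEquiv_symm_extFibSet (d k : ℕ) :
    MapsTo (Fin.snocEquiv fun _ => ℤ).symm (extFibSet (d + 1) k)
      (Icc (-(k : ℤ)) k ×ˢ extFibSet d k) := fun x hx =>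
  ⟨abs_le.mp (hx.1 _), fun i => hx.1 _, fun i j hij => hx.2 _ _ (by simpa using hij)⟩

lemma single_last_mem_extFibSet (n k : ℕ) :
    Pi.single (Fin.last n) (k : ℤ) ∈ extFibSet (n + 1) k := by
  refine ⟨fun i => ?_, fun i j hij => ?_⟩
  · rcases eq_or_ne i (Fin.last n) with rfl | hi <;> simp [*]
  · have hi : i ≠ Fin.last n := fun h => by
      have := j.isLt
      rw [h, Fin.val_last] at hij
      omega
    rcases eq_or_ne j (Fin.last n) with rfl | hj <;> simp [*]

lemma snoc_single_last_not_mem_extFibSet {n k : ℕ} (hk : 1 ≤ k) :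
    Fin.snoc (Pi.single (Fin.last n) (k : ℤ)) (k : ℤ) ∉ extFibSet (n + 2) k := by
  intro hx
  have := hx.2 (Fin.castSucc (Fin.last n)) (Fin.last (n + 1)) (by simp)
  simp only [Fin.snoc_castSucc, Pi.single_eq_same, Fin.snoc_last, Nat.abs_cast] at this
  omega

lemma ExtFibPts_succ_succ_lt (n : ℕ) {k : ℕ} (hk : 1 ≤ k) :
    ExtFibPts (n + 2) k < (2 * k + 1) * ExtFibPts (n + 1) k := by
  set e := (Fin.snocEquiv fun _ : Fin (n + 2) => ℤ).symm
  have hsub : e '' extFibSet (n + 2) k ⊂ Icc (-(k : ℤ)) k ×ˢ extFibSet (n + 1) k := by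
    refine ssubset_of_subset_not_subset (mapsTo_snocEquiv_symm_extFibSet _ _).image_subset ?_
    intro h
    obtain ⟨x, hx, hex⟩ := h (show ((k : ℤ), Pi.single (Fin.last n) (k : ℤ)) ∈ _ from
      ⟨by simp, single_last_mem_extFibSet n k⟩)
    rw [← Equiv.eq_symm_apply] at hex
    exact snoc_single_last_not_mem_extFibSet hk (hex ▸ hx)
  calc ExtFibPts (n + 2) k = (e '' extFibSet (n + 2) k).ncard :=
        (ncard_image_of_injective _ e.injective).symm
    _ < (Icc (-(k : ℤ)) k ×ˢ extFibSet (n + 1) k).ncard :=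
        ncard_lt_ncard hsub ((finite_Icc _ _).prod (extFibSet_finite _ _))
    _ = (2 * k + 1) * ExtFibPts (n + 1) k := by
        rw [ncard_prod, Int.ncard_Icc, ExtFibPts_eq_ncard]; congr 1; omega

theorem stmt9 (d a : ℕ) (hd : 1 ≤ d) (ha : 1 ≤ a) :
    ExtFibPts (d+1) a < (2*a+1) * ExtFibPts d a := by
  obtain ⟨n, rfl⟩ := Nat.exists_eq_add_of_le' hd
  exact ExtFibPts_succ_succ_lt n ha
end

section
/- Let d ≥ 1 be an integer. The Lebesgue measure (volume) of the set {x ∈ ℝ^d : 0 ≤ x_i ≤ 1 for all 1 ≤ i ≤ d, and x_i + x_{i+1} ≤ 1 for all 1 ≤ i ≤ d−1} (the d-dimensional Fibonacci polytope) equals Alt(d)/d!. -/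
/-- A permutation `σ` of `Fin d` (thought of as `{1, …, d}`) is alternating if
`σ(1) > σ(2) < σ(3) > σ(4) < ⋯`.  In 0-based indexing: for consecutive indices
`i, j = i+1`, if `i` is even then `σ i > σ j`, and if `i` is odd then `σ i < σ j`. -/
def IsAlternating {d : ℕ} (σ : Equiv.Perm (Fin d)) : Prop :=
  ∀ i j : Fin d, (j : ℕ) = (i : ℕ) + 1 →
    (((i : ℕ) % 2 = 0 → σ j < σ i) ∧ ((i : ℕ) % 2 = 1 → σ i < σ j))

/-- `Alt d` : the number of alternating permutations of `{1, …, d}` (Euler zigzag number). -/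
noncomputable def Alt (d : ℕ) : ℕ :=
  Nat.card {σ : Equiv.Perm (Fin d) // IsAlternating σ}

/-!
Reflecting every other coordinate, `x i ↦ 1 - x i` for even (0-based) `i`, preserves volume and
maps the Fibonacci polytope onto the zigzag region `t 0 ≥ t 1 ≤ t 2 ≥ ⋯` of the unit cube.
Off the null set of points with a repeated coordinate, the cube is the disjoint union of the `d!`
congruent order simplices `{t | t ∘ σ strictly increasing}`, so each has volume `1 / d!`. A point
with distinct coordinates lies in the simplex of `σ = Tuple.sort t`, and it lies in the zigzag
region exactly when its rank permutation `σ⁻¹` is alternating.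
-/

open MeasureTheory Set Function Nat

theorem Tuple.sort_eq_of_strictMono {α : Type*} [LinearOrder α] {n : ℕ} {f : Fin n → α}
    {σ : Equiv.Perm (Fin n)} (h : StrictMono (f ∘ σ)) : Tuple.sort f = σ :=
  (Tuple.eq_sort_iff.2 ⟨h.monotone, fun _ _ hij hf => absurd hf (h hij).ne⟩).symm

theorem Tuple.strictMono_comp_sort {α : Type*} [LinearOrder α] {n : ℕ} {f : Fin n → α}
    (hf : Injective f) : StrictMono (f ∘ Tuple.sort f) :=
  (Tuple.monotone_sort f).strictMono_of_injective (hf.comp (Tuple.sort f).injective)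

theorem ae_injective_pi {ι : Type*} [Fintype ι] : ∀ᵐ t : ι → ℝ, Injective t := by
  classical
  let diag (i j : ι) : (ι → ℝ) →ₗ[ℝ] ℝ :=
    (LinearMap.proj i : (ι → ℝ) →ₗ[ℝ] ℝ) - LinearMap.proj j
  have hdiag (i j : ι) (hij : i ≠ j) :
      volume (LinearMap.ker (diag i j) : Set (ι → ℝ)) = 0 :=
    Measure.addHaar_submodule _ _ fun htop => by
      have hsingle : Pi.single i 1 ∈ LinearMap.ker (diag i j) := htop ▸ Submodule.mem_top
      simp [diag, hij.symm] at hsingle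
  rw [ae_iff]
  refine measure_mono_null (fun t ht => ?_) (measure_iUnion_null fun i =>
    measure_iUnion_null fun j => measure_iUnion_null (hdiag i j))
  obtain ⟨i, j, hij, hne⟩ : ∃ i j, t i = t j ∧ i ≠ j := by simpa [Injective] using ht
  simp only [mem_iUnion]
  exact ⟨i, j, hne, by simp [diag, hij]⟩

variable {d : ℕ}

def unitCube (d : ℕ) : Set (Fin d → ℝ) := univ.pi fun _ => Icc 0 1

def orderSimplex (σ : Equiv.Perm (Fin d)) : Set (Fin d → ℝ) :=
  unitCube d ∩ {t | StrictMono (t ∘ σ)}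

lemma volume_unitCube : volume (unitCube d) = 1 := by
  rw [unitCube, volume_pi_pi]
  simp

lemma measurableSet_unitCube : MeasurableSet (unitCube d) :=
  MeasurableSet.univ_pi fun _ => measurableSet_Icc

lemma measurableSet_orderSimplex (σ : Equiv.Perm (Fin d)) : MeasurableSet (orderSimplex σ) :=
  measurableSet_unitCube.inter (measurableSet_setOfPred.2 (by unfold StrictMono; measurability))

lemma mem_orderSimplex_iff {σ : Equiv.Perm (Fin d)} {t : Fin d → ℝ} :
    t ∈ orderSimplex σ ↔ t ∈ unitCube d ∧ Injective t ∧ Tuple.sort t = σ := by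
  refine ⟨fun ⟨hcube, hmono⟩ => ⟨hcube, ?_, Tuple.sort_eq_of_strictMono hmono⟩, ?_⟩
  · simpa using hmono.injective.comp σ.symm.injective
  · rintro ⟨hcube, hinj, rfl⟩
    exact ⟨hcube, Tuple.strictMono_comp_sort hinj⟩

lemma volume_orderSimplex_eq (σ : Equiv.Perm (Fin d)) :
    volume (orderSimplex σ) = volume (orderSimplex (1 : Equiv.Perm (Fin d))) := by
  let Φ := MeasurableEquiv.piCongrLeft (fun _ : Fin d => ℝ) σ.symm
  have hpre : orderSimplex σ = Φ ⁻¹' orderSimplex 1 := by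
    have hΦ (t : Fin d → ℝ) : Φ t = t ∘ σ := by
      funext a
      simpa [Φ, MeasurableEquiv.coe_piCongrLeft] using
        Equiv.piCongrLeft_apply_apply (fun _ => ℝ) σ.symm t (σ a)
    ext t
    simp only [orderSimplex, mem_preimage, hΦ, Equiv.Perm.coe_one, comp_id]
    refine and_congr_left' ?_
    simp only [unitCube, mem_univ_pi, comp_apply]
    exact σ.symm.forall_congr_left
  rw [hpre]
  exact (volume_measurePreserving_piCongrLeft (fun _ => ℝ) σ.symm).measure_preimage_equiv _

lemma iUnion_orderSimplex (P : Equiv.Perm (Fin d) → Prop) :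
    ⋃ σ : {σ // P σ}, orderSimplex σ.1 =
      {t | t ∈ unitCube d ∧ P (Tuple.sort t)} ∩ {t | Injective t} := by
  ext t
  simp only [mem_iUnion, mem_orderSimplex_iff, mem_inter_iff, mem_ofPred_eq, Subtype.exists]
  grind

lemma volume_setOf_sort_eq_mul (P : Equiv.Perm (Fin d) → Prop) :
    volume {t | t ∈ unitCube d ∧ P (Tuple.sort t)} =
      Nat.card {σ // P σ} * volume (orderSimplex (1 : Equiv.Perm (Fin d))) := by
  classical
  rw [← measure_inter_conull ae_injective_pi, ← iUnion_orderSimplex,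
    measure_iUnion (fun σ τ hστ => ?_) fun σ => measurableSet_orderSimplex _]
  · simp [volume_orderSimplex_eq]
  · exact disjoint_left.2 fun t hσ hτ => hστ <| Subtype.ext <|
      (mem_orderSimplex_iff.1 hσ).2.2.symm.trans (mem_orderSimplex_iff.1 hτ).2.2

lemma volume_orderSimplex (σ : Equiv.Perm (Fin d)) :
    volume (orderSimplex σ) = (d ! : ENNReal)⁻¹ := by
  have hcube := volume_setOf_sort_eq_mul (d := d) fun _ => True
  simp only [and_true, ofPred_mem_eq, volume_unitCube, Nat.card_eq_fintype_card,
    Fintype.card_subtype_true, Fintype.card_perm, Fintype.card_fin] at hcube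
  rw [volume_orderSimplex_eq]
  exact ENNReal.eq_inv_of_mul_eq_one_left (by rw [mul_comm, ← hcube])

theorem volume_setOf_sort (P : Equiv.Perm (Fin d) → Prop) :
    volume {t | t ∈ unitCube d ∧ P (Tuple.sort t)} = Nat.card {σ // P σ} / d ! := by
  rw [volume_setOf_sort_eq_mul, volume_orderSimplex, div_eq_mul_inv]

lemma isAlternating_inv_sort_iff {t : Fin d → ℝ} (ht : Injective t) :
    IsAlternating (Tuple.sort t)⁻¹ ↔ ∀ i j : Fin d, (j : ℕ) = i + 1 →
      (((i : ℕ) % 2 = 0 → t j < t i) ∧ ((i : ℕ) % 2 = 1 → t i < t j)) := by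
  have hrank : ∀ i j, (Tuple.sort t)⁻¹ i < (Tuple.sort t)⁻¹ j ↔ t i < t j := fun i j => by
    simpa using Iff.symm <| (Tuple.strictMono_comp_sort ht).lt_iff_lt (a := (Tuple.sort t)⁻¹ i)
      (b := (Tuple.sort t)⁻¹ j)
  simp only [IsAlternating, hrank]

def zigzagRegion (d : ℕ) : Set (Fin d → ℝ) :=
  unitCube d ∩ {t | ∀ i j : Fin d, (j : ℕ) = i + 1 →
    (((i : ℕ) % 2 = 0 → t j ≤ t i) ∧ ((i : ℕ) % 2 = 1 → t i ≤ t j))}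

lemma measurableSet_zigzagRegion : MeasurableSet (zigzagRegion d) :=
  measurableSet_unitCube.inter (measurableSet_setOfPred.2 (by measurability))

lemma zigzagRegion_inter_injective : zigzagRegion d ∩ {t | Injective t} =
    {t | t ∈ unitCube d ∧ IsAlternating (Tuple.sort t)⁻¹} ∩ {t | Injective t} := by
  ext t
  simp only [zigzagRegion, mem_inter_iff, mem_ofPred_eq]
  refine ⟨fun ⟨⟨hcube, hzig⟩, ht⟩ => ⟨⟨hcube, ?_⟩, ht⟩,
    fun ⟨⟨hcube, halt⟩, ht⟩ => ⟨⟨hcube, ?_⟩, ht⟩⟩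
  · refine (isAlternating_inv_sort_iff ht).2 fun i j hij => ?_
    have hne : t j ≠ t i := ht.ne (Fin.ne_of_val_ne (by omega))
    exact ⟨fun h => ((hzig i j hij).1 h).lt_of_ne hne,
      fun h => ((hzig i j hij).2 h).lt_of_ne hne.symm⟩
  · exact fun i j hij => ((isAlternating_inv_sort_iff ht).1 halt i j hij).imp
      (fun h hi => (h hi).le) (fun h hi => (h hi).le)

lemma volume_zigzagRegion : volume (zigzagRegion d) = Alt d / d ! := by
  rw [← measure_inter_conull ae_injective_pi, zigzagRegion_inter_injective,
    measure_inter_conull ae_injective_pi, volume_setOf_sort fun σ => IsAlternating σ⁻¹]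
  congr 2
  exact Nat.card_congr ((Equiv.inv _).subtypeEquiv fun _ => Iff.rfl)

def reflectEven (x : Fin d → ℝ) : Fin d → ℝ :=
  fun i => if (i : ℕ) % 2 = 0 then 1 - x i else x i

lemma measurePreserving_reflectEven : MeasurePreserving (reflectEven (d := d)) :=
  volume_preserving_pi (f := fun (i : Fin d) (y : ℝ) => if (i : ℕ) % 2 = 0 then 1 - y else y)
    fun i => by
    split_ifs
    exacts [Measure.measurePreserving_sub_left volume 1, MeasurePreserving.id _]

lemma reflectEven_preimage_zigzagRegion : reflectEven ⁻¹' zigzagRegion d =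
    {x : Fin d → ℝ | (∀ i, 0 ≤ x i ∧ x i ≤ 1) ∧
      ∀ i j : Fin d, (j : ℕ) = (i : ℕ) + 1 → x i + x j ≤ 1} := by
  ext x
  simp only [zigzagRegion, unitCube, mem_preimage, mem_inter_iff, mem_univ_pi, mem_Icc,
    mem_ofPred_eq]
  refine and_congr (forall_congr' fun _ => ?_)
    (forall₂_congr fun _ _ => forall_congr' fun _ => ?_)
  all_goals grind [reflectEven]

theorem stmt10_general (d : ℕ) :
    MeasureTheory.volume
      {x : Fin d → ℝ | (∀ i, 0 ≤ x i ∧ x i ≤ 1) ∧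
        ∀ i j : Fin d, (j : ℕ) = (i : ℕ) + 1 → x i + x j ≤ 1}
      = (Alt d : ENNReal) / (Nat.factorial d : ENNReal) := by
  rw [← reflectEven_preimage_zigzagRegion, measurePreserving_reflectEven.measure_preimage
    measurableSet_zigzagRegion.nullMeasurableSet, volume_zigzagRegion]

theorem stmt10 (d : ℕ) (hd : 1 ≤ d) :
    MeasureTheory.volume
      {x : Fin d → ℝ | (∀ i, 0 ≤ x i ∧ x i ≤ 1) ∧
        ∀ i j : Fin d, (j : ℕ) = (i : ℕ) + 1 → x i + x j ≤ 1}
      = (Alt d : ENNReal) / (Nat.factorial d : ENNReal) :=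
  stmt10_general d
end

section
/- Let d ≥ 2 and k ≥ 0 be integers. Then F(d, k) = Σ_{m=0}^{d−2} s_d(m) · C(k + d − m, d), where C(·,·) is the binomial coefficient. -/
/-- `swapStat σ` : the number of values `i` (with `i+1` also a value) such that
`σ⁻¹(i) < σ⁻¹(i+1) − 1`, i.e. `σ⁻¹(i) + 1 < σ⁻¹(i+1)`. -/
noncomputable def swapStat {d : ℕ} (σ : Equiv.Perm (Fin d)) : ℕ :=
  Nat.card {p : Fin d × Fin d // (p.2 : ℕ) = (p.1 : ℕ) + 1 ∧
    ((σ⁻¹ p.1 : Fin d) : ℕ) + 1 < ((σ⁻¹ p.2 : Fin d) : ℕ)}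

/-- `sSwap d m` : the number of alternating permutations `σ` of `{1, …, d}` with
`swapStat σ = m`. -/
noncomputable def sSwap (d m : ℕ) : ℕ :=
  Nat.card {σ : Equiv.Perm (Fin d) // IsAlternating σ ∧ swapStat σ = m}

/-!
Reflecting the even coordinates, `x i ↦ k - x i`, identifies the lattice points with zigzag
sequences `z 0 ≥ z 1 ≤ z 2 ≥ ⋯` in `{0, …, k}`.  Ranking the entries of such a sequence, with a
fixed rule for breaking ties, writes it uniquely as `t ∘ σ` with `σ` alternating and `t` weakly
increasing, strictly so across every swap of `σ` (Stanley's decomposition of the `P`-partitions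
of the zigzag poset).  Adding to `t r` the number of non-swap steps before `r` makes `t` strictly
increasing, so for `σ` with `m` swaps there are `C(k + d - m, d)` such `t`.  An alternating
permutation has at most `d - 2` swaps.
-/

open Finset Function

namespace FibonacciPolytope

variable {d : ℕ}

section Adjacent

variable {α : Type*} [Preorder α] {f : Fin d → α}

lemma monotone_iff_adjacent :
    Monotone f ↔ ∀ a b : Fin d, (b : ℕ) = a + 1 → f a ≤ f b := by
  cases d with
  | zero => exact ⟨fun _ a => a.elim0, fun _ a => a.elim0⟩
  | succ n =>
    rw [Fin.monotone_iff_le_succ]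
    refine ⟨fun h a b hab => ?_, fun h i => h _ _ (by simp)⟩
    obtain ⟨i, rfl⟩ : ∃ i : Fin n, i.castSucc = a := ⟨⟨a, by omega⟩, rfl⟩
    obtain rfl : b = i.succ := Fin.ext (by simpa using hab)
    exact h i

lemma strictMono_iff_adjacent :
    StrictMono f ↔ ∀ a b : Fin d, (b : ℕ) = a + 1 → f a < f b := by
  cases d with
  | zero => exact ⟨fun _ a => a.elim0, fun _ a => a.elim0⟩
  | succ n =>
    rw [Fin.strictMono_iff_lt_succ]
    refine ⟨fun h a b hab => ?_, fun h i => h _ _ (by simp)⟩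
    obtain ⟨i, rfl⟩ : ∃ i : Fin n, i.castSucc = a := ⟨⟨a, by omega⟩, rfl⟩
    obtain rfl : b = i.succ := Fin.ext (by simpa using hab)
    exact h i

lemma _root_.StrictMono.val_add_sub_le {N : ℕ} {u : Fin d → Fin N} (hu : StrictMono u)
    {a b : Fin d} (hab : a ≤ b) : (u a : ℕ) + (b - a) ≤ u b := by
  have : Monotone fun r => (u r : ℤ) - r := monotone_iff_adjacent.2 fun a b hab => by
    have := hu (show a < b by rw [Fin.lt_def]; omega)
    rw [Fin.lt_def] at this
    omega
  have := this hab
  simp only at this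
  rw [Fin.le_def] at hab
  omega

end Adjacent

lemma _root_.StrictMono.le_val_apply {N : ℕ} {u : Fin d → Fin N} (hu : StrictMono u)
    (r : Fin d) : (r : ℕ) ≤ u r := by
  have := r.2
  have h := hu.val_add_sub_le (a := ⟨0, by omega⟩) (b := r) (Fin.le_def.2 (Nat.zero_le _))
  simp only at h
  omega

lemma _root_.StrictMono.val_apply_add_le {N : ℕ} {u : Fin d → Fin N} (hu : StrictMono u)
    (r : Fin d) : (u r : ℕ) + (d - r) ≤ N := by
  have := r.2
  have h := hu.val_add_sub_le (a := r) (b := ⟨d - 1, by omega⟩) (Fin.le_def.2 (by simp; omega))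
  have := (u ⟨d - 1, by omega⟩).2
  simp only at h
  omega

section Zigzag

variable {α : Type*} [Preorder α]

def IsZigzag (z : Fin d → α) : Prop :=
  ∀ i j : Fin d, (j : ℕ) = i + 1 →
    (((i : ℕ) % 2 = 0 → z j ≤ z i) ∧ ((i : ℕ) % 2 = 1 → z i ≤ z j))

def StrictAt (D : Finset ℕ) (t : Fin d → α) : Prop :=
  ∀ a b : Fin d, (b : ℕ) = a + 1 → (a : ℕ) ∈ D → t a < t b

end Zigzag

def swapSet (σ : Equiv.Perm (Fin d)) : Finset ℕ :=
  (range (d - 1)).filter fun r =>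
    ∃ a b : Fin d, (a : ℕ) = r ∧ (b : ℕ) = r + 1 ∧ (σ⁻¹ a : ℕ) + 1 < σ⁻¹ b

lemma mem_swapSet_iff {σ : Equiv.Perm (Fin d)} {a b : Fin d} (hab : (b : ℕ) = a + 1) :
    (a : ℕ) ∈ swapSet σ ↔ (σ⁻¹ a : ℕ) + 1 < σ⁻¹ b := by
  simp only [swapSet, mem_filter, mem_range]
  constructor
  · rintro ⟨-, a', b', ha', hb', h⟩
    obtain rfl : a' = a := Fin.ext ha'
    obtain rfl : b' = b := Fin.ext (by omega)
    exact h
  · exact fun h => ⟨by omega, a, b, rfl, hab, h⟩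

lemma swapSet_subset_range (σ : Equiv.Perm (Fin d)) : swapSet σ ⊆ range (d - 1) :=
  filter_subset _ _

lemma card_swapSet (σ : Equiv.Perm (Fin d)) : #(swapSet σ) = swapStat σ := by
  rw [swapStat, ← Nat.card_eq_finsetCard]
  symm
  exact Nat.card_congr
    { toFun p := ⟨p.1.1, (mem_swapSet_iff p.2.1).2 p.2.2⟩
      invFun r :=
        have := mem_range.1 (swapSet_subset_range σ r.2)
        ⟨(⟨r, by omega⟩, ⟨r + 1, by omega⟩), rfl, (mem_swapSet_iff rfl).1 r.2⟩
      left_inv p := Subtype.ext (Prod.ext rfl (Fin.ext p.2.1.symm))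
      right_inv r := rfl }

/-- If every step were a swap, `σ⁻¹` would advance by at least two at each step and overshoot. -/
lemma card_swapSet_lt (hd : 2 ≤ d) (σ : Equiv.Perm (Fin d)) : #(swapSet σ) < d - 1 := by
  refine (card_lt_card ((swapSet_subset_range σ).ssubset_of_ne fun hall => ?_)).trans_eq
    (card_range _)
  have hmono : Monotone fun r : Fin d => (σ⁻¹ r : ℤ) - 2 * r :=
    monotone_iff_adjacent.2 fun a b hab => by
      have := (mem_swapSet_iff (σ := σ) hab).1 (hall ▸ mem_range.2 (by omega))
      omega
  have hends := hmono (show (⟨0, by omega⟩ : Fin d) ≤ ⟨d - 1, by omega⟩ from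
    Fin.le_def.2 (Nat.zero_le _))
  have := (σ⁻¹ ⟨d - 1, by omega⟩).2
  simp only at hends
  omega

lemma card_strictMono_fin (a N : ℕ) :
    Nat.card {u : Fin a → Fin N // StrictMono u} = N.choose a := by
  let e : {u : Fin a → Fin N // StrictMono u} ≃ (Fin a ↪o Fin N) :=
    { toFun u := OrderEmbedding.ofStrictMono u.1 u.2
      invFun f := ⟨f, f.strictMono⟩
      left_inv _ := rfl
      right_inv _ := rfl }
  rw [Nat.card_congr (e.trans Set.powersetCard.ofFinEmbEquiv), Set.powersetCard.card,
    Nat.card_eq_fintype_card, Fintype.card_fin]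

lemma card_range_succ_sdiff (D : Finset ℕ) (r : ℕ) :
    #(range (r + 1) \ D) = #(range r \ D) + if r ∈ D then 0 else 1 := by
  rw [range_add_one]
  split_ifs with h
  · rw [insert_sdiff_of_mem _ h, add_zero]
  · rw [insert_sdiff_of_notMem _ h, card_insert_of_notMem (by simp)]

lemma card_range_sdiff_le (D : Finset ℕ) (r : ℕ) : #(range r \ D) ≤ r :=
  (card_le_card sdiff_subset).trans (card_range r).le

lemma sub_card_le_card_range_sdiff (D : Finset ℕ) (r : ℕ) : r - #D ≤ #(range r \ D) := by
  rw [card_sdiff, card_range]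
  have := card_le_card (inter_subset_left : D ∩ range r ⊆ D)
  omega

lemma card_range_sdiff_le_of_subset {D : Finset ℕ} {n r : ℕ} (hD : D ⊆ range n) (hr : r ≤ n) :
    #(range r \ D) ≤ n - #D := by
  calc #(range r \ D) ≤ #(range n \ D) :=
        card_le_card (sdiff_subset_sdiff (range_subset_range.2 hr) subset_rfl)
    _ = n - #D := by rw [card_sdiff_of_subset hD, card_range]

def weakShiftEquiv {k : ℕ} {D : Finset ℕ} (hD : D ⊆ range (d - 1)) :
    {t : Fin d → Fin (k + 1) // Monotone t ∧ StrictAt D t} ≃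
      {u : Fin d → Fin (k + d - #D) // StrictMono u} where
  toFun t := ⟨fun r => ⟨t.1 r + #(range r \ D), by
      have := card_range_sdiff_le_of_subset hD (show (r : ℕ) ≤ d - 1 by omega)
      have := card_le_card hD
      have := r.2
      have := (t.1 r).2
      simp only [card_range] at *
      omega⟩,
    strictMono_iff_adjacent.2 fun a b hab => by
      have hmono := monotone_iff_adjacent.1 t.2.1 a b hab
      have hstrict := t.2.2 a b hab
      rw [Fin.le_def] at hmono
      rw [Fin.lt_def] at hstrict ⊢
      simp only [hab, card_range_succ_sdiff]
      by_cases ha : (a : ℕ) ∈ D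
      · simp only [ha, if_true]
        have := hstrict ha
        omega
      · simp only [ha, if_false]
        omega⟩
  invFun u := ⟨fun r => ⟨u.1 r - #(range r \ D), by
      have := u.2.val_apply_add_le r
      have := sub_card_le_card_range_sdiff D r
      omega⟩,
    monotone_iff_adjacent.2 fun a b hab => by
      have hlt : (u.1 a : ℕ) < u.1 b := u.2 (Fin.lt_def.2 (by omega))
      have := u.2.le_val_apply a
      have := card_range_sdiff_le D a
      rw [Fin.le_def]
      simp only [hab, card_range_succ_sdiff]
      split_ifs <;> omega,
    fun a b hab ha => by
      have hlt : (u.1 a : ℕ) < u.1 b := u.2 (Fin.lt_def.2 (by omega))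
      have := u.2.le_val_apply a
      have := card_range_sdiff_le D a
      rw [Fin.lt_def]
      simp only [hab, card_range_succ_sdiff, ha, if_true]
      omega⟩
  left_inv t := by ext r; simp
  right_inv u := by
    ext r
    have := u.2.le_val_apply r
    have := card_range_sdiff_le D r
    simp only
    omega

theorem card_monotone_strictAt {k : ℕ} {D : Finset ℕ} (hD : D ⊆ range (d - 1)) :
    Nat.card {t : Fin d → Fin (k + 1) // Monotone t ∧ StrictAt D t} = (k + d - #D).choose d := by
  rw [Nat.card_congr (weakShiftEquiv hD), card_strictMono_fin]

/-- Ties between equal entries of a zigzag sequence are ranked from right to left, except that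
position `i` is ranked before `i + 1` when `i` is odd (the zigzag ascends there).  This makes the
ranking alternating without putting a swap between equal entries. -/
def tieKey (n : ℕ) : ℤ := if n % 2 = 1 then -n - 1 else 1 - n

lemma tieKey_lt_tieKey_iff {a b : ℕ} :
    tieKey a < tieKey b ↔ b + 2 ≤ a ∨ (b = a + 1 ∧ a % 2 = 1) ∨ (a = b + 1 ∧ b % 2 = 0) := by
  unfold tieKey; split_ifs <;> omega

lemma tieKey_injective : Injective tieKey := by
  intro a b h; unfold tieKey at h; split_ifs at h <;> omega

section Rank

variable {α : Type*}

def rankKey (z : Fin d → α) (i : Fin d) : α ×ₗ ℤ := toLex (z i, tieKey i)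

lemma rankKey_injective (z : Fin d → α) : Injective (rankKey z) := fun _ _ h =>
  Fin.ext (tieKey_injective (Prod.ext_iff.1 (toLex.injective h)).2)

variable [LinearOrder α]

lemma rankKey_lt_rankKey_iff {z : Fin d → α} {i j : Fin d} :
    rankKey z i < rankKey z j ↔ z i < z j ∨ z i = z j ∧ tieKey i < tieKey j :=
  Prod.Lex.toLex_lt_toLex

noncomputable def rankPerm (z : Fin d → α) : Equiv.Perm (Fin d) :=
  (Tuple.sort (rankKey z))⁻¹

lemma strictMono_rankKey_comp_rankPerm_inv (z : Fin d → α) :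
    StrictMono (rankKey z ∘ ⇑(rankPerm z)⁻¹) :=
  (Tuple.monotone_sort _).strictMono_of_injective
    ((rankKey_injective z).comp (Equiv.injective _))

lemma rankPerm_lt_rankPerm_iff {z : Fin d → α} {i j : Fin d} :
    rankPerm z i < rankPerm z j ↔ rankKey z i < rankKey z j := by
  simpa using ((strictMono_rankKey_comp_rankPerm_inv z).lt_iff_lt (a := rankPerm z i)
    (b := rankPerm z j)).symm

lemma rankPerm_eq_of_strictMono {z : Fin d → α} {σ : Equiv.Perm (Fin d)}
    (h : StrictMono (rankKey z ∘ ⇑σ⁻¹)) : rankPerm z = σ := by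
  rw [rankPerm, inv_eq_iff_eq_inv, eq_comm, Tuple.eq_sort_iff]
  exact ⟨h.monotone, fun i j hij heq => absurd heq (h hij).ne⟩

lemma isAlternating_rankPerm {z : Fin d → α} (hz : IsZigzag z) : IsAlternating (rankPerm z) := by
  intro i j hij
  simp only [rankPerm_lt_rankPerm_iff, rankKey_lt_rankKey_iff, tieKey_lt_tieKey_iff]
  have := hz i j hij
  constructor <;> intro hi
  · rcases (this.1 hi).lt_or_eq with h | h
    exacts [Or.inl h, Or.inr ⟨h, by omega⟩]
  · rcases (this.2 hi).lt_or_eq with h | h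
    exacts [Or.inl h, Or.inr ⟨h, by omega⟩]

lemma monotone_comp_rankPerm_inv (z : Fin d → α) : Monotone (z ∘ ⇑(rankPerm z)⁻¹) :=
  Prod.Lex.monotone_fst_ofLex.comp (strictMono_rankKey_comp_rankPerm_inv z).monotone

lemma strictAt_swapSet_comp_rankPerm_inv (z : Fin d → α) :
    StrictAt (swapSet (rankPerm z)) (z ∘ ⇑(rankPerm z)⁻¹) := by
  intro a b hab hswap
  rw [mem_swapSet_iff hab] at hswap
  have hrank := strictMono_rankKey_comp_rankPerm_inv z (show a < b by rw [Fin.lt_def]; omega)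
  simp only [comp_apply, rankKey_lt_rankKey_iff, tieKey_lt_tieKey_iff] at hrank ⊢
  rcases hrank with h | ⟨-, h⟩
  · exact h
  · omega

lemma tieKey_lt_of_isAlternating {σ : Equiv.Perm (Fin d)} (hσ : IsAlternating σ) {i j : Fin d}
    (hij : σ i < σ j) (hji : (j : ℕ) ≤ i + 1) : tieKey i < tieKey j := by
  have hne : (i : ℕ) ≠ j := fun h => (Fin.ext h ▸ hij).false
  rw [tieKey_lt_tieKey_iff]
  by_cases hsucc : (j : ℕ) = i + 1
  · have := (hσ i j hsucc).1
    exact Or.inr (Or.inl ⟨hsucc, by by_contra hodd; exact (this (by omega)).asymm hij⟩)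
  by_cases hpred : (i : ℕ) = j + 1
  · have := (hσ j i hpred).2
    exact Or.inr (Or.inr ⟨hpred, by by_contra hev; exact (this (by omega)).asymm hij⟩)
  omega

lemma isZigzag_comp {σ : Equiv.Perm (Fin d)} (hσ : IsAlternating σ) {t : Fin d → α}
    (ht : Monotone t) : IsZigzag (t ∘ σ) := fun i j hij =>
  ⟨fun h => ht ((hσ i j hij).1 h).le, fun h => ht ((hσ i j hij).2 h).le⟩

lemma rankPerm_comp_eq {σ : Equiv.Perm (Fin d)} (hσ : IsAlternating σ) {t : Fin d → α}
    (ht : Monotone t) (hts : StrictAt (swapSet σ) t) : rankPerm (t ∘ σ) = σ := by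
  refine rankPerm_eq_of_strictMono (strictMono_iff_adjacent.2 fun a b hab => ?_)
  have hσσ : ∀ x, σ (σ⁻¹ x) = x := σ.apply_symm_apply
  simp only [comp_apply, rankKey_lt_rankKey_iff, hσσ]
  rcases (monotone_iff_adjacent.1 ht a b hab).lt_or_eq with hlt | heq
  · exact Or.inl hlt
  · refine Or.inr ⟨heq, tieKey_lt_of_isAlternating hσ ?_ ?_⟩
    · rw [hσσ, hσσ, Fin.lt_def]; omega
    · by_contra hgap
      exact (hts a b hab ((mem_swapSet_iff hab).2 (by omega))).ne heq

noncomputable def zigzagEquiv : {z : Fin d → α // IsZigzag z} ≃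
    Σ σ : {σ : Equiv.Perm (Fin d) // IsAlternating σ},
      {t : Fin d → α // Monotone t ∧ StrictAt (swapSet σ.1) t} where
  toFun z := ⟨⟨rankPerm z.1, isAlternating_rankPerm z.2⟩, ⟨z.1 ∘ ⇑(rankPerm z.1)⁻¹,
    monotone_comp_rankPerm_inv z.1, strictAt_swapSet_comp_rankPerm_inv z.1⟩⟩
  invFun p := ⟨p.2.1 ∘ p.1.1, isZigzag_comp p.1.2 p.2.2.1⟩
  left_inv z := Subtype.ext (by ext; simp)
  right_inv p := by
    have h := rankPerm_comp_eq p.1.2 p.2.2.1 p.2.2.2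
    exact Sigma.subtype_ext (Subtype.ext h) (by ext; simp [h])

end Rank

theorem fibPts_eq_card_isZigzag (d k : ℕ) :
    FibPts d k = Nat.card {z : Fin d → Fin (k + 1) // IsZigzag z} := by
  rw [FibPts, ← Nat.card_coe_set_eq]
  refine Nat.card_congr
    { toFun x := ⟨fun i => ⟨(if (i : ℕ) % 2 = 0 then k - x.1 i else x.1 i).toNat, by
          have := x.2.1 i
          split_ifs <;> omega⟩, fun i j hij => by
          have := x.2.1 i
          have := x.2.1 j
          have := x.2.2 i j hij
          simp only [Fin.le_def]
          split_ifs <;> omega⟩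
      invFun z := ⟨fun i => if (i : ℕ) % 2 = 0 then k - (z.1 i : ℤ) else z.1 i,
        fun i => by
          have := (z.1 i).2
          dsimp only
          split_ifs <;> omega,
        fun i j hij => by
          have := z.2 i j hij
          simp only [Fin.le_def] at this
          dsimp only
          split_ifs <;> omega⟩
      left_inv x := by
        ext i
        have := x.2.1 i
        simp only
        split_ifs <;> omega
      right_inv z := by
        ext i
        simp only
        split_ifs <;> omega }

lemma sum_isAlternating_eq_sum_sSwap [DecidablePred (IsAlternating (d := d))] (hd : 2 ≤ d)
    (f : ℕ → ℕ) :
    ∑ σ : {σ : Equiv.Perm (Fin d) // IsAlternating σ}, f (swapStat σ.1) =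
      ∑ m ∈ range (d - 1), sSwap d m * f m := by
  rw [← sum_fiberwise_of_maps_to (g := fun σ => swapStat σ.1) (t := range (d - 1))
    fun σ _ => mem_range.2 (card_swapSet σ.1 ▸ card_swapSet_lt hd σ.1)]
  refine sum_congr rfl fun m _ => ?_
  rw [sum_congr rfl fun σ hσ => by rw [(mem_filter.1 hσ).2], sum_const, smul_eq_mul, sSwap,
    ← Nat.card_congr (Equiv.subtypeSubtypeEquivSubtypeInter _ _), Nat.card_eq_fintype_card,
    Fintype.card_subtype]

end FibonacciPolytope

open FibonacciPolytope

theorem stmt11 (d k : ℕ) (hd : 2 ≤ d) :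
    FibPts d k = ∑ m ∈ Finset.range (d-1), sSwap d m * Nat.choose (k + d - m) d := by
  classical
  rw [fibPts_eq_card_isZigzag, Nat.card_congr zigzagEquiv, Nat.card_sigma,
    ← sum_isAlternating_eq_sum_sSwap hd]
  refine sum_congr rfl fun σ _ => ?_
  rw [card_monotone_strictAt (swapSet_subset_range σ.1), card_swapSet]
end

section
/- Let d ≥ 2 be an integer. Then 2 · Σ_{m=0}^{d−2} m · s_d(m) = (d − 2) · Alt(d). -/
open Finset Equiv
open SimpleGraph (pathGraph pathGraph_adj)
open scoped Classical

section Alternating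

variable {d : ℕ}

noncomputable def alternatingPerms (d : ℕ) : Finset (Perm (Fin d)) := {σ | IsAlternating σ}

theorem Alt_eq_card (d : ℕ) : Alt d = #(alternatingPerms d) := by
  rw [Alt, Nat.card_eq_fintype_card, Fintype.card_subtype, alternatingPerms]

theorem sSwap_eq_card (d m : ℕ) :
    sSwap d m = #{σ ∈ alternatingPerms d | swapStat σ = m} := by
  rw [sSwap, Nat.card_eq_fintype_card, Fintype.card_subtype, alternatingPerms, filter_filter]

theorem isAlternating_mul_iff {π σ : Perm (Fin d)}
    (h : ∀ i j, (pathGraph d).Adj i j → (π (σ i) < π (σ j) ↔ σ i < σ j)) :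
    IsAlternating (π * σ) ↔ IsAlternating σ := by
  simp only [IsAlternating, Perm.mul_apply]
  refine forall₂_congr fun i j => imp_congr_right fun hij => ?_
  have hadj : (pathGraph d).Adj i j := pathGraph_adj.mpr (Or.inl hij.symm)
  rw [h i j hadj, h j i hadj.symm]

theorem IsAlternating.apply_lt_apply_iff {σ : Perm (Fin d)} (hσ : IsAlternating σ) {x y : Fin d}
    (h : (pathGraph d).Adj x y) : σ x < σ y ↔ (y : ℕ) % 2 = 0 := by
  have hne : σ x ≠ σ y := σ.injective.ne h.ne
  rcases pathGraph_adj.mp h with h | h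
  · have := hσ x y h.symm
    have := lt_asymm (a := σ x) (b := σ y)
    omega
  · have := hσ y x h.symm
    have := lt_asymm (a := σ x) (b := σ y)
    have := lt_or_gt_of_ne hne
    omega

theorem swap_apply_lt_swap_apply_iff {a b v w : Fin d} (hab : (pathGraph d).Adj a b)
    (h : ¬(v = a ∧ w = b)) (h' : ¬(v = b ∧ w = a)) : swap a b v < swap a b w ↔ v < w := by
  rw [pathGraph_adj] at hab
  rw [swap_apply_def, swap_apply_def]
  split_ifs <;> simp only [Fin.lt_def, Fin.ext_iff] at * <;> omega

theorem IsAlternating.swap_mul {a b : Fin d} (hab : (pathGraph d).Adj a b) {σ : Perm (Fin d)}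
    (hσ : IsAlternating σ) (h : ¬(pathGraph d).Adj (σ⁻¹ a) (σ⁻¹ b)) :
    IsAlternating (swap a b * σ) := by
  refine (isAlternating_mul_iff fun i j hij => swap_apply_lt_swap_apply_iff hab ?_ ?_).mpr hσ
  · rintro ⟨rfl, rfl⟩
    simp only [Perm.coe_inv, symm_apply_apply] at h
    exact h hij
  · rintro ⟨rfl, rfl⟩
    simp only [Perm.coe_inv, symm_apply_apply] at h
    exact h hij.symm

theorem card_gap_comm {a b : Fin d} (hab : (pathGraph d).Adj a b) :
    #{σ ∈ alternatingPerms d | (σ⁻¹ a : ℕ) + 1 < σ⁻¹ b} =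
      #{σ ∈ alternatingPerms d | (σ⁻¹ b : ℕ) + 1 < σ⁻¹ a} := by
  have swap_mem : ∀ {a b : Fin d}, (pathGraph d).Adj a b → ∀ σ : Perm (Fin d),
      σ ∈ {σ ∈ alternatingPerms d | (σ⁻¹ a : ℕ) + 1 < σ⁻¹ b} →
      swap a b * σ ∈ {σ ∈ alternatingPerms d | (σ⁻¹ b : ℕ) + 1 < σ⁻¹ a} := by
    intro a b hab σ hσ
    simp only [alternatingPerms, mem_filter, mem_univ, true_and] at hσ ⊢
    refine ⟨hσ.1.swap_mul hab fun h => ?_, ?_⟩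
    · rw [pathGraph_adj] at h; omega
    · simpa [mul_inv_rev, swap_inv] using hσ.2
  refine card_nbij' (swap a b * ·) (swap a b * ·) (swap_mem hab) ?_ ?_ ?_
  · rw [swap_comm]; exact swap_mem hab.symm
  · intro σ _; simp [← mul_assoc]
  · intro σ _; simp [← mul_assoc]

theorem card_gap_add_card_gap_add_card_adj (s : Finset (Perm (Fin d))) {a b : Fin d}
    (hab : a ≠ b) :
    #{σ ∈ s | (σ⁻¹ a : ℕ) + 1 < σ⁻¹ b} + #{σ ∈ s | (σ⁻¹ b : ℕ) + 1 < σ⁻¹ a} +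
      #{σ ∈ s | (pathGraph d).Adj (σ⁻¹ a) (σ⁻¹ b)} = #s := by
  rw [card_filter, card_filter, card_filter, ← sum_add_distrib, ← sum_add_distrib,
    card_eq_sum_ones]
  refine sum_congr rfl fun σ _ => ?_
  have : (σ⁻¹ a : ℕ) ≠ σ⁻¹ b := fun h => hab (σ⁻¹.injective (Fin.ext h))
  rw [pathGraph_adj]
  split_ifs <;> omega

theorem two_mul_card_gap_add_card_adj {a b : Fin d} (hab : (pathGraph d).Adj a b) :
    2 * #{σ ∈ alternatingPerms d | (σ⁻¹ a : ℕ) + 1 < σ⁻¹ b} +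
      #{σ ∈ alternatingPerms d | (pathGraph d).Adj (σ⁻¹ a) (σ⁻¹ b)} = #(alternatingPerms d) := by
  have := card_gap_add_card_gap_add_card_adj (alternatingPerms d) hab.ne
  rw [← card_gap_comm hab] at this
  omega

end Alternating

section Consecutive

variable {n : ℕ}

theorem swapStat_eq_card (σ : Perm (Fin (n + 1))) :
    swapStat σ = #{i : Fin n | (σ⁻¹ i.castSucc : ℕ) + 1 < σ⁻¹ i.succ} := by
  rw [swapStat, Nat.card_eq_fintype_card, Fintype.card_subtype]
  symm
  refine card_bij (fun i _ => (i.castSucc, i.succ)) (fun i hi => by simpa using hi)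
    (fun i _ j _ h => Fin.castSucc_injective n (Prod.ext_iff.mp h).1) ?_
  rintro ⟨a, b⟩ hab
  simp only [mem_filter, mem_univ, true_and] at hab
  obtain ⟨hb, hgap⟩ := hab
  have hlt : a < b := Fin.lt_def.mpr (by omega)
  obtain ⟨i, rfl⟩ := Fin.exists_castSucc_eq.mpr (Fin.ne_last_of_lt hlt)
  obtain rfl : b = i.succ := Fin.ext (by simp [hb])
  exact ⟨i, by simpa using hgap, rfl⟩

theorem swapStat_lt [NeZero n] (σ : Perm (Fin (n + 1))) : swapStat σ < n := by
  rw [swapStat_eq_card]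
  refine (card_lt_card (filter_ssubset.mpr ?_)).trans_eq (card_fin n)
  by_contra! h
  have hpos : ∀ m (hm : m < n + 1), 2 * m ≤ σ⁻¹ ⟨m, hm⟩ := by
    intro m
    induction m with
    | zero => simp
    | succ m ih =>
      intro hm
      have := h ⟨m, by omega⟩ (mem_univ _)
      have := ih (by omega)
      simp only [Fin.castSucc_mk, Fin.succ_mk] at *
      omega
  have := hpos n (by omega)
  have := NeZero.pos n
  omega

theorem sum_range_mul_sSwap [NeZero n] :
    ∑ m ∈ range n, m * sSwap (n + 1) m = ∑ σ ∈ alternatingPerms (n + 1), swapStat σ := by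
  rw [← sum_fiberwise_of_maps_to (g := swapStat) fun σ _ => mem_range.mpr (swapStat_lt σ)]
  refine sum_congr rfl fun m _ => ?_
  rw [sSwap_eq_card, sum_const_nat fun σ hσ => (mem_filter.mp hσ).2, mul_comm]

theorem sum_swapStat (s : Finset (Perm (Fin (n + 1)))) :
    ∑ σ ∈ s, swapStat σ = ∑ i : Fin n, #{σ ∈ s | (σ⁻¹ i.castSucc : ℕ) + 1 < σ⁻¹ i.succ} := by
  simp only [swapStat_eq_card, card_filter]
  exact sum_comm

theorem val_cycleIcc_last (k v : Fin (n + 1)) :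
    (Fin.cycleIcc k (Fin.last n) v : ℕ) =
      if v < k then (v : ℕ) else if v = Fin.last n then (k : ℕ) else (v : ℕ) + 1 := by
  split_ifs with hvk hv
  · rw [Fin.cycleIcc_of_lt hvk]
  · subst hv
    rw [Fin.cycleIcc_of_le_of_le (not_lt.mp hvk) le_rfl, if_pos rfl]
  · rw [Fin.cycleIcc_of_le_of_le (not_lt.mp hvk) (Fin.le_last v), if_neg hv,
      Fin.val_add_one_of_lt (Fin.lt_last_iff_ne_last.mpr hv)]

theorem cycleIcc_last_lt_cycleIcc_last_iff {k v w : Fin (n + 1)}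
    (hv : v = Fin.last n → w < k) (hw : w = Fin.last n → v < k) :
    Fin.cycleIcc k (Fin.last n) v < Fin.cycleIcc k (Fin.last n) w ↔ v < w := by
  rw [Fin.lt_def, Fin.lt_def, val_cycleIcc_last, val_cycleIcc_last]
  simp only [Fin.lt_def, Fin.ext_iff, Fin.val_last] at *
  split_ifs <;> omega

theorem cycleIcc_last_lt_iff {k v : Fin (n + 1)} :
    Fin.cycleIcc k (Fin.last n) v < k ↔ v < k := by
  rw [Fin.lt_def, val_cycleIcc_last]
  simp only [Fin.lt_def, Fin.ext_iff, Fin.val_last]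
  split_ifs <;> omega

theorem isAlternating_cycleIcc_mul_iff {k : Fin (n + 1)} {τ : Perm (Fin (n + 1))}
    (h : ∀ z, (pathGraph (n + 1)).Adj (τ⁻¹ (Fin.last n)) z → τ z < k) :
    IsAlternating (Fin.cycleIcc k (Fin.last n) * τ) ↔ IsAlternating τ :=
  isAlternating_mul_iff fun i j hij => cycleIcc_last_lt_cycleIcc_last_iff
    (fun hi => h j (by rwa [Perm.inv_eq_iff_eq.mpr hi.symm]))
    (fun hj => h i (by rw [Perm.inv_eq_iff_eq.mpr hj.symm]; exact hij.symm))

noncomputable def topNeighbourMax (τ : Perm (Fin (n + 1))) : Fin (n + 1) :=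
  ((pathGraph (n + 1)).neighborFinset (τ⁻¹ (Fin.last n))).sup τ

theorem topNeighbourMax_le_iff {τ : Perm (Fin (n + 1))} {a : Fin (n + 1)} :
    topNeighbourMax τ ≤ a ↔ ∀ z, (pathGraph (n + 1)).Adj (τ⁻¹ (Fin.last n)) z → τ z ≤ a := by
  simp only [topNeighbourMax, Finset.sup_le_iff, SimpleGraph.mem_neighborFinset]

theorem apply_le_topNeighbourMax {τ : Perm (Fin (n + 1))} {z : Fin (n + 1)}
    (h : (pathGraph (n + 1)).Adj (τ⁻¹ (Fin.last n)) z) : τ z ≤ topNeighbourMax τ :=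
  topNeighbourMax_le_iff.mp le_rfl z h

theorem exists_adj_apply_eq_topNeighbourMax [NeZero n] (τ : Perm (Fin (n + 1))) :
    ∃ z, (pathGraph (n + 1)).Adj (τ⁻¹ (Fin.last n)) z ∧ τ z = topNeighbourMax τ := by
  have hne : ((pathGraph (n + 1)).neighborFinset (τ⁻¹ (Fin.last n))).Nonempty := by
    have := NeZero.pos n
    have := (τ⁻¹ (Fin.last n)).isLt
    by_cases hy : (τ⁻¹ (Fin.last n) : ℕ) < n
    · exact ⟨⟨τ⁻¹ (Fin.last n) + 1, by omega⟩,
        (SimpleGraph.mem_neighborFinset _ _ _).mpr (pathGraph_adj.mpr (Or.inl rfl))⟩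
    · exact ⟨⟨τ⁻¹ (Fin.last n) - 1, by omega⟩,
        (SimpleGraph.mem_neighborFinset _ _ _).mpr
          (pathGraph_adj.mpr (Or.inr (by dsimp only; omega)))⟩
  obtain ⟨z, hz, hmax⟩ := exists_mem_eq_sup _ hne τ
  exact ⟨z, (SimpleGraph.mem_neighborFinset _ _ _).mp hz, hmax.symm⟩

theorem topNeighbourMax_ne_last [NeZero n] (τ : Perm (Fin (n + 1))) :
    topNeighbourMax τ ≠ Fin.last n := fun h => by
  obtain ⟨z, hz, hzmax⟩ := exists_adj_apply_eq_topNeighbourMax τ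
  exact hz.ne (Perm.inv_eq_iff_eq.mpr (hzmax.trans h).symm)

theorem isAlternating_cycleIcc_mul_and_adj_iff (i : Fin n) (τ : Perm (Fin (n + 1))) :
    (IsAlternating (Fin.cycleIcc i.succ (Fin.last n) * τ) ∧
      (pathGraph (n + 1)).Adj ((Fin.cycleIcc i.succ (Fin.last n) * τ)⁻¹ i.castSucc)
        ((Fin.cycleIcc i.succ (Fin.last n) * τ)⁻¹ i.succ)) ↔
      IsAlternating τ ∧ topNeighbourMax τ = i.castSucc := by
  have : NeZero n := NeZero.of_pos i.pos
  set π := Fin.cycleIcc i.succ (Fin.last n)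
  have hπ_last : π (Fin.last n) = i.succ := Fin.cycleIcc_of_last (Fin.le_last _)
  have hπ_castSucc : π i.castSucc = i.castSucc := Fin.cycleIcc_of_lt Fin.castSucc_lt_succ
  have hx : (π * τ)⁻¹ i.castSucc = τ⁻¹ i.castSucc := by
    rw [mul_inv_rev, Perm.mul_apply, Perm.inv_eq_iff_eq.mpr hπ_castSucc.symm]
  have hy : (π * τ)⁻¹ i.succ = τ⁻¹ (Fin.last n) := by
    rw [mul_inv_rev, Perm.mul_apply, Perm.inv_eq_iff_eq.mpr hπ_last.symm]
  rw [hx, hy]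
  constructor
  · rintro ⟨hσ, hadj⟩
    have hsmall : ∀ z, (pathGraph (n + 1)).Adj (τ⁻¹ (Fin.last n)) z → τ z < i.succ := by
      intro z hz
      -- `i.succ` exceeds its neighbour `i.castSucc`, so it is a peak
      have hpeak := (hσ.apply_lt_apply_iff hadj).mp (by
        simp only [Perm.mul_apply, Perm.coe_inv, apply_symm_apply, hπ_castSucc, hπ_last]
        exact Fin.castSucc_lt_succ)
      have := (hσ.apply_lt_apply_iff hz.symm).mpr hpeak
      simp only [Perm.mul_apply, Perm.coe_inv, apply_symm_apply, hπ_last] at this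
      exact cycleIcc_last_lt_iff.mp this
    refine ⟨(isAlternating_cycleIcc_mul_iff hsmall).mp hσ, le_antisymm ?_ ?_⟩
    · exact topNeighbourMax_le_iff.mpr fun z hz => Fin.le_castSucc_iff.mpr (hsmall z hz)
    · simpa only [Perm.coe_inv, apply_symm_apply] using apply_le_topNeighbourMax hadj.symm
  · rintro ⟨hτ, hmax⟩
    have hsmall : ∀ z, (pathGraph (n + 1)).Adj (τ⁻¹ (Fin.last n)) z → τ z < i.succ :=
      fun z hz => Fin.le_castSucc_iff.mp (hmax ▸ apply_le_topNeighbourMax hz)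
    obtain ⟨x, hadj, hτx⟩ := exists_adj_apply_eq_topNeighbourMax τ
    refine ⟨(isAlternating_cycleIcc_mul_iff hsmall).mpr hτ, ?_⟩
    rw [Perm.inv_eq_iff_eq.mpr (hτx.trans hmax).symm]
    exact hadj.symm

theorem card_adj_eq_card_topNeighbourMax_eq (i : Fin n) :
    #{σ ∈ alternatingPerms (n + 1) | (pathGraph (n + 1)).Adj (σ⁻¹ i.castSucc) (σ⁻¹ i.succ)} =
      #{τ ∈ alternatingPerms (n + 1) | topNeighbourMax τ = i.castSucc} := by
  refine (card_equiv (Equiv.mulLeft (Fin.cycleIcc i.succ (Fin.last n))) fun τ => ?_).symm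
  simp only [alternatingPerms, mem_filter, mem_univ, true_and, coe_mulLeft]
  exact (isAlternating_cycleIcc_mul_and_adj_iff i τ).symm

theorem sum_card_adj [NeZero n] :
    ∑ i : Fin n,
        #{σ ∈ alternatingPerms (n + 1) | (pathGraph (n + 1)).Adj (σ⁻¹ i.castSucc) (σ⁻¹ i.succ)} =
      #(alternatingPerms (n + 1)) := by
  rw [card_eq_sum_card_fiberwise (f := topNeighbourMax) (t := univ) fun _ _ => mem_univ _,
    Fin.sum_univ_castSucc, filter_false_of_mem fun τ _ => topNeighbourMax_ne_last τ, card_empty,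
    add_zero]
  exact sum_congr rfl fun i _ => card_adj_eq_card_topNeighbourMax_eq i

end Consecutive

theorem stmt12 (d : ℕ) (hd : 2 ≤ d) :
    2 * ∑ m ∈ Finset.range (d-1), m * sSwap d m = (d - 2) * Alt d := by
  obtain ⟨n, rfl⟩ : ∃ n, d = n + 2 := ⟨d - 2, by omega⟩
  have hsum := sum_congr rfl fun i (_ : i ∈ (univ : Finset (Fin (n + 1)))) =>
    two_mul_card_gap_add_card_adj
      (pathGraph_adj.mpr (Or.inl (show (i.castSucc : ℕ) + 1 = i.succ by simp)))
  rw [sum_add_distrib, ← mul_sum, sum_card_adj, sum_const, card_univ, Fintype.card_fin,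
    smul_eq_mul] at hsum
  rw [show n + 2 - 1 = n + 1 by omega, Nat.add_sub_cancel, sum_range_mul_sSwap, sum_swapStat,
    Alt_eq_card]
  linarith
end

section
/- Let n ≥ 2 and 0 ≤ r ≤ n−2 be integers. Then the number of surjective maps f : {1,…,n} → {1,…,n−r} satisfying the alternating condition f(1) > f(2) < f(3) > f(4) < ⋯ equals Σ_{m=0}^{n−2} C(m, r) · s_n(m), where C(·,·) is the binomial coefficient. -/
/-!
Standardize: rank the positions of `f` by value, breaking ties from left to right. This gives a
permutation `σ` with `f = c ∘ σ` for a monotone surjection `c` of `{0, …, n-1}` onto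
`n - r` values, and `c` is determined by the `r`-set `S` of values `i` with `c i = c (i+1)`.
Since `f` is alternating, so is `σ`, and for `i ∈ S` the positions of `i` and `i+1` are in
increasing order (ties are broken left to right) but not adjacent (an alternating map never takes
the same value twice in a row): so `S` consists of swaps of `σ`. Conversely, any `r` swaps of an
alternating `σ` can be merged this way. Hence the count is `∑_σ C(swap σ, r)`.
-/

open Finset

section Collapse

/-- The monotone map `ℕ → ℕ` that goes up by one at each step `i → i + 1`, except at
`i ∈ S` where it stays flat. -/
def collapse (S : Finset ℕ) (v : ℕ) : ℕ := #{i ∈ range v | i ∉ S}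

variable {S T : Finset ℕ}

@[simp] lemma collapse_zero (S : Finset ℕ) : collapse S 0 = 0 := by simp [collapse]

lemma collapse_succ (S : Finset ℕ) (v : ℕ) :
    collapse S (v + 1) = collapse S v + if v ∈ S then 0 else 1 := by
  unfold collapse
  rw [range_add_one, filter_insert]
  split_ifs with hv <;> simp [card_insert_of_notMem]

lemma collapse_mono (S : Finset ℕ) : Monotone (collapse S) :=
  monotone_nat_of_le_succ fun v => by rw [collapse_succ]; omega

lemma collapse_succ_eq_iff {v : ℕ} : collapse S (v + 1) = collapse S v ↔ v ∈ S := by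
  rw [collapse_succ]; split_ifs <;> simp_all

lemma mem_of_collapse_eq {a b i : ℕ} (h : collapse S a = collapse S b) (hai : a ≤ i)
    (hib : i < b) : i ∈ S := by
  have h₁ := collapse_mono S hai
  have h₂ : collapse S (i + 1) ≤ collapse S b := collapse_mono S hib
  have h₃ : collapse S i ≤ collapse S (i + 1) := collapse_mono S (Nat.le_succ i)
  exact collapse_succ_eq_iff.mp (by omega)

lemma collapse_add_card {m : ℕ} (hS : S ⊆ range m) : collapse S m + #S = m := by
  conv_rhs => rw [← card_range m, ← card_filter_add_card_filter_not (· ∉ S)]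
  rw [collapse, add_right_inj]
  congr 1
  ext i
  simpa using fun hi => mem_range.mp (hS hi)

lemma collapse_lt_sub_card {n v : ℕ} (hS : S ⊆ range (n - 1)) (hv : v < n) :
    collapse S v < n - #S := by
  have := collapse_add_card hS
  have := collapse_mono S (Nat.le_sub_one_of_lt hv)
  omega

lemma exists_collapse_eq {v w : ℕ} (hw : w ≤ collapse S v) : ∃ u ≤ v, collapse S u = w := by
  induction v generalizing w with
  | zero => exact ⟨0, le_rfl, by simp_all⟩
  | succ v ih =>
    rcases le_or_gt w (collapse S v) with h | h
    · obtain ⟨u, hu, rfl⟩ := ih h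
      exact ⟨u, by omega, rfl⟩
    · rw [collapse_succ] at hw
      exact ⟨v + 1, le_rfl, by rw [collapse_succ]; split_ifs at hw ⊢ <;> omega⟩

lemma eq_of_collapse_eq {n : ℕ} (hS : S ⊆ range (n - 1)) (hT : T ⊆ range (n - 1))
    (h : ∀ v < n, collapse S v = collapse T v) : S = T := by
  ext i
  by_cases hi : i < n - 1
  · rw [← collapse_succ_eq_iff, ← collapse_succ_eq_iff, h i (by omega), h (i + 1) (by omega)]
  · exact iff_of_false (fun h' => hi (mem_range.mp (hS h'))) (fun h' => hi (mem_range.mp (hT h')))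

lemma collapse_filter_eq {m : ℕ} {c : ℕ → ℕ} (h₀ : c 0 = 0)
    (hstep : ∀ i < m, c i ≤ c (i + 1) ∧ c (i + 1) ≤ c i + 1) :
    ∀ v ≤ m, collapse {i ∈ range m | c (i + 1) = c i} v = c v := by
  intro v hv
  induction v with
  | zero => simp [h₀]
  | succ v ih =>
    have := hstep v (by omega)
    rw [collapse_succ, ih (by omega)]
    by_cases hv' : c (v + 1) = c v <;> simp [hv', show v < m by omega]; omega

end Collapse

section MonotoneSurjective

variable {n k : ℕ} {g : Fin n → Fin k}

lemma val_le_val_add_one_of_monotone_of_surjective (hmono : Monotone g)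
    (hsurj : Function.Surjective g) {i j : Fin n} (hij : (j : ℕ) = i + 1) :
    (g j : ℕ) ≤ g i + 1 := by
  by_contra! hgap
  obtain ⟨x, hx⟩ := hsurj ⟨g i + 1, by have := (g j).isLt; omega⟩
  rcases le_or_gt x i with hxi | hxi
  · have : g x ≤ g i := hmono hxi
    simp only [hx, Fin.le_def] at this
    omega
  · have : g j ≤ g x := hmono (Fin.le_def.mpr (by rw [Fin.lt_def] at hxi; omega))
    simp only [hx, Fin.le_def] at this
    omega

lemma exists_collapse_eq_of_monotone_of_surjective (hmono : Monotone g)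
    (hsurj : Function.Surjective g) :
    ∃ S ⊆ range (n - 1), #S + k = n ∧ ∀ j : Fin n, collapse S j = g j := by
  rcases Nat.eq_zero_or_pos n with rfl | hn
  · refine ⟨∅, empty_subset _, ?_, fun j => j.elim0⟩
    rw [card_empty, zero_add, ← Nat.le_zero]
    by_contra! hk
    obtain ⟨j, -⟩ := hsurj ⟨0, hk⟩
    exact j.elim0
  let c : ℕ → ℕ := fun v => if h : v < n then g ⟨v, h⟩ else 0
  have hc : ∀ v (h : v < n), c v = g ⟨v, h⟩ := fun v h => dif_pos h
  have h₀ : c 0 = 0 := by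
    obtain ⟨j, hj⟩ := hsurj ⟨0, (g ⟨0, hn⟩).pos⟩
    have : g ⟨0, hn⟩ ≤ g j := hmono (Nat.zero_le _)
    rw [hc 0 hn, hj] at *
    exact Nat.le_zero.mp this
  have hlast : c (n - 1) + 1 = k := by
    obtain ⟨j, hj⟩ := hsurj ⟨k - 1, by have := (g ⟨0, hn⟩).pos; omega⟩
    have : g j ≤ g ⟨n - 1, by omega⟩ := hmono (Nat.le_sub_one_of_lt j.isLt)
    have := (g ⟨n - 1, by omega⟩).isLt
    simp only [hc (n - 1) (by omega), hj, Fin.le_def] at *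
    omega
  have hstep : ∀ i < n - 1, c i ≤ c (i + 1) ∧ c (i + 1) ≤ c i + 1 := fun i hi => by
    rw [hc i (by omega), hc (i + 1) (by omega)]
    exact ⟨hmono (Nat.le_succ i), val_le_val_add_one_of_monotone_of_surjective hmono hsurj rfl⟩
  have hcollapse := collapse_filter_eq h₀ hstep
  refine ⟨{i ∈ range (n - 1) | c (i + 1) = c i}, filter_subset _ _, ?_, fun j => ?_⟩
  · have := collapse_add_card (filter_subset (fun i => c (i + 1) = c i) (range (n - 1)))
    rw [hcollapse (n - 1) le_rfl] at this
    omega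
  · rw [hcollapse j (Nat.le_sub_one_of_lt j.isLt), hc j j.isLt]

end MonotoneSurjective

section Swaps

open Equiv

variable {n : ℕ}

/-- `σ⁻¹` read on `ℕ`, with the junk value `n` outside `Fin n`. -/
def pos (σ : Perm (Fin n)) (v : ℕ) : ℕ := if h : v < n then σ⁻¹ ⟨v, h⟩ else n

lemma pos_of_lt (σ : Perm (Fin n)) {v : ℕ} (h : v < n) : pos σ v = σ⁻¹ ⟨v, h⟩ :=
  dif_pos h

@[simp] lemma pos_val (σ : Perm (Fin n)) (v : Fin n) : pos σ v = σ⁻¹ v := pos_of_lt σ v.isLt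

def swapSet (σ : Perm (Fin n)) : Finset ℕ :=
  {i ∈ range (n - 1) | pos σ i + 1 < pos σ (i + 1)}

lemma swapSet_subset_range (σ : Perm (Fin n)) : swapSet σ ⊆ range (n - 1) := filter_subset _ _

lemma mem_swapSet {σ : Perm (Fin n)} {i : ℕ} :
    i ∈ swapSet σ ↔
      ∃ h : i + 1 < n, (σ⁻¹ ⟨i, by omega⟩ : ℕ) + 1 < σ⁻¹ ⟨i + 1, h⟩ := by
  rw [swapSet, mem_filter, mem_range]
  constructor
  · rintro ⟨hi, h⟩
    exact ⟨by omega, by rwa [pos_of_lt σ (by omega), pos_of_lt σ (by omega)] at h⟩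
  · rintro ⟨hi, h⟩
    exact ⟨by omega, by rwa [pos_of_lt σ (by omega), pos_of_lt σ hi]⟩

lemma swapStat_eq_card_swapSet (σ : Perm (Fin n)) : swapStat σ = #(swapSet σ) := by
  rw [swapStat, ← Nat.card_eq_finsetCard]
  refine Nat.card_congr
    { toFun := fun p => ⟨p.1.1, mem_swapSet.mpr ⟨p.2.1 ▸ p.1.2.isLt, ?_⟩⟩
      invFun := fun i =>
        ⟨(⟨i, _⟩, ⟨i + 1, (mem_swapSet.mp i.2).1⟩), rfl, (mem_swapSet.mp i.2).2⟩
      left_inv := fun p => Subtype.ext (Prod.ext rfl (Fin.ext p.2.1.symm))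
      right_inv := fun i => rfl }
  convert p.2.2 using 4
  exact p.2.1.symm

lemma pos_add_two_mul_le (σ : Perm (Fin n)) {a b : ℕ} (hab : a ≤ b)
    (h : ∀ i, a ≤ i → i < b → i ∈ swapSet σ) : pos σ a + 2 * (b - a) ≤ pos σ b := by
  induction b, hab using Nat.le_induction with
  | base => simp
  | succ b hab ih =>
    have h₁ := (mem_filter.mp (h b hab (Nat.lt_succ_self b))).2
    have h₂ := ih fun i hai hib => h i hai (by omega)
    omega

lemma card_swapSet_lt (hn : 2 ≤ n) (σ : Perm (Fin n)) : #(swapSet σ) < n - 1 := by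
  by_contra h
  have hall : swapSet σ = range (n - 1) :=
    eq_of_subset_of_card_le (swapSet_subset_range σ) (by rw [card_range]; omega)
  have := pos_add_two_mul_le σ (Nat.zero_le (n - 1)) fun i _ hi => hall ▸ mem_range.mpr hi
  have := pos_of_lt σ (show n - 1 < n by omega) ▸ (σ⁻¹ ⟨n - 1, by omega⟩).isLt
  omega

variable {S : Finset ℕ} {σ : Perm (Fin n)}

lemma pos_add_one_lt_of_collapse_eq (hS : S ⊆ swapSet σ) {a b : ℕ} (hab : a < b)
    (h : collapse S a = collapse S b) : pos σ a + 1 < pos σ b := by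
  have := pos_add_two_mul_le σ hab.le fun i hai hib => hS (mem_of_collapse_eq h hai hib)
  omega

lemma collapse_lt_collapse (hS : S ⊆ swapSet σ) {a b : Fin n} (hab : σ a < σ b)
    (hba : (b : ℕ) ≤ a + 1) : collapse S (σ a) < collapse S (σ b) := by
  refine (collapse_mono S hab.le).lt_of_ne fun h => ?_
  have := pos_add_one_lt_of_collapse_eq hS hab h
  simp only [pos_val, Perm.coe_inv, symm_apply_apply] at this
  omega

end Swaps

section Zigzag

variable {n : ℕ} {α : Type*}

def IsZigzag [LT α] (f : Fin n → α) : Prop :=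
  ∀ i j : Fin n, (j : ℕ) = i + 1 →
    ((i : ℕ) % 2 = 0 → f j < f i) ∧ ((i : ℕ) % 2 = 1 → f i < f j)

lemma IsZigzag.apply_ne [Preorder α] {f : Fin n → α} (hf : IsZigzag f) {i j : Fin n}
    (hij : (j : ℕ) = i + 1) : f i ≠ f j := by
  rcases Nat.mod_two_eq_zero_or_one i with h | h
  · exact ((hf i j hij).1 h).ne'
  · exact ((hf i j hij).2 h).ne

open Tuple

lemma Tuple.sort_symm_lt_of_lt [LinearOrder α] (f : Fin n → α) {a b : Fin n} (h : f a < f b) :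
    (sort f)⁻¹ a < (sort f)⁻¹ b := by
  by_contra h'
  have := monotone_sort f (not_lt.mp h')
  simp only [Function.comp_apply, Equiv.Perm.coe_inv, Equiv.apply_symm_apply] at this
  exact this.not_gt h

lemma IsZigzag.isAlternating_sort_inv [LinearOrder α] {f : Fin n → α} (hf : IsZigzag f) :
    IsAlternating (sort f)⁻¹ := fun i j hij =>
  ⟨fun h => sort_symm_lt_of_lt f ((hf i j hij).1 h),
    fun h => sort_symm_lt_of_lt f ((hf i j hij).2 h)⟩

lemma IsZigzag.sort_add_one_lt [LinearOrder α] {f : Fin n → α} (hf : IsZigzag f) {i j : Fin n}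
    (hij : i < j) (h : f (sort f i) = f (sort f j)) : (sort f i : ℕ) + 1 < sort f j := by
  have hlt : sort f i < sort f j := (eq_sort_iff.mp rfl).2 i j hij h
  have hne : (sort f j : ℕ) ≠ sort f i + 1 := fun he => hf.apply_ne he h
  rw [Fin.lt_def] at hlt
  omega

end Zigzag

section Bijection

open Equiv Tuple

variable {n r : ℕ}

def collapseMap (σ : Perm (Fin n)) {S : Finset ℕ} (hS : S ∈ (swapSet σ).powersetCard r) :
    Fin n → Fin (n - r) := fun j =>
  ⟨collapse S (σ j), (mem_powersetCard.mp hS).2 ▸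
    collapse_lt_sub_card ((mem_powersetCard.mp hS).1.trans (swapSet_subset_range σ)) (σ j).isLt⟩

variable {σ : Perm (Fin n)} {S : Finset ℕ}

lemma collapseMap_surjective (hS : S ∈ (swapSet σ).powersetCard r) :
    Function.Surjective (collapseMap σ hS) := by
  obtain ⟨hsub, hcard⟩ := mem_powersetCard.mp hS
  intro w
  have := collapse_add_card (hsub.trans (swapSet_subset_range σ))
  have := w.isLt
  obtain ⟨v, hv, hvw⟩ := exists_collapse_eq (S := S) (v := n - 1) (w := w) (by omega)
  refine ⟨σ⁻¹ ⟨v, by omega⟩, Fin.ext ?_⟩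
  simpa [collapseMap] using hvw

lemma isZigzag_collapseMap (hσ : IsAlternating σ) (hS : S ∈ (swapSet σ).powersetCard r) :
    IsZigzag (collapseMap σ hS) := by
  have hsub := (mem_powersetCard.mp hS).1
  intro i j hij
  exact ⟨fun hi => collapse_lt_collapse hsub ((hσ i j hij).1 hi) (by omega),
    fun hi => collapse_lt_collapse hsub ((hσ i j hij).2 hi) (by omega)⟩

lemma sort_collapseMap (hS : S ∈ (swapSet σ).powersetCard r) :
    sort (collapseMap σ hS) = σ⁻¹ := by
  have hsub := (mem_powersetCard.mp hS).1
  refine (eq_sort_iff.mpr ⟨fun a b hab => ?_, fun a b hab h => ?_⟩).symm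
  · simpa [collapseMap] using collapse_mono S hab
  · simp only [collapseMap, Fin.mk.injEq, Perm.coe_inv, apply_symm_apply] at h
    have := pos_add_one_lt_of_collapse_eq hsub hab h
    rw [pos_val, pos_val] at this
    exact Fin.lt_def.mpr (by omega)

def zigzagOfSwaps
    (x : Σ σ : {σ : Perm (Fin n) // IsAlternating σ}, (swapSet σ.1).powersetCard r) :
    {f : Fin n → Fin (n - r) // Function.Surjective f ∧ IsZigzag f} :=
  ⟨collapseMap x.1.1 x.2.2, collapseMap_surjective x.2.2, isZigzag_collapseMap x.1.2 x.2.2⟩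

lemma zigzagOfSwaps_injective : Function.Injective (zigzagOfSwaps (n := n) (r := r)) := by
  rintro ⟨⟨σ, hσ⟩, ⟨S, hS⟩⟩ ⟨⟨τ, hτ⟩, ⟨T, hT⟩⟩ h
  have hf : collapseMap σ hS = collapseMap τ hT := congrArg Subtype.val h
  obtain rfl : σ = τ :=
    inv_injective ((sort_collapseMap hS).symm.trans (hf ▸ sort_collapseMap hT))
  have hrange (U) (hU : U ∈ (swapSet σ).powersetCard r) : U ⊆ range (n - 1) :=
    (mem_powersetCard.mp hU).1.trans (swapSet_subset_range σ)
  obtain rfl : S = T := eq_of_collapse_eq (hrange S hS) (hrange T hT) fun v hv => by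
    have := congrArg (fun f => (f (σ⁻¹ ⟨v, hv⟩) : ℕ)) hf
    simpa [collapseMap] using this
  rfl

lemma zigzagOfSwaps_surjective (hr : r ≤ n) :
    Function.Surjective (zigzagOfSwaps (n := n) (r := r)) := by
  rintro ⟨f, hsurj, hf⟩
  obtain ⟨S, hrange, hcard, hS⟩ :=
    exists_collapse_eq_of_monotone_of_surjective (monotone_sort f) (hsurj.comp (sort f).surjective)
  have hsub : S ⊆ swapSet (sort f)⁻¹ := fun i hi => by
    have hi' : i + 1 < n := by have := mem_range.mp (hrange hi); omega
    refine mem_swapSet.mpr ⟨hi', ?_⟩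
    simp only [inv_inv]
    refine hf.sort_add_one_lt (Fin.mk_lt_mk.mpr (Nat.lt_succ_self i)) (Fin.ext ?_)
    have := collapse_succ_eq_iff.mpr hi
    rw [hS ⟨i, by omega⟩, hS ⟨i + 1, hi'⟩] at this
    exact this.symm
  refine ⟨⟨⟨(sort f)⁻¹, hf.isAlternating_sort_inv⟩,
    ⟨S, mem_powersetCard.mpr ⟨hsub, by omega⟩⟩⟩,
    Subtype.ext (funext fun j => Fin.ext ?_)⟩
  simp [zigzagOfSwaps, collapseMap, hS]

end Bijection

instance {n : ℕ} : DecidablePred (IsAlternating (d := n)) := fun σ => by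
  unfold IsAlternating; infer_instance

lemma sum_choose_swapStat {n : ℕ} (hn : 2 ≤ n) (r : ℕ) :
    ∑ σ : {σ : Equiv.Perm (Fin n) // IsAlternating σ}, (swapStat σ.1).choose r =
      ∑ m ∈ range (n - 1), m.choose r * sSwap n m := by
  rw [← sum_subtype (univ.filter IsAlternating) (by simp) (fun σ => (swapStat σ).choose r),
    ← sum_fiberwise_of_maps_to (g := swapStat) (t := range (n - 1))
      fun σ _ => mem_range.mpr (swapStat_eq_card_swapSet σ ▸ card_swapSet_lt hn σ)]
  refine sum_congr rfl fun m _ => ?_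
  rw [sum_congr rfl fun σ hσ => by rw [(mem_filter.mp hσ).2], sum_const, smul_eq_mul, mul_comm,
    sSwap, Nat.card_eq_fintype_card, Fintype.card_subtype, filter_filter]

theorem stmt17 (n r : ℕ) (hn : 2 ≤ n) (hr : r ≤ n - 2) :
    Nat.card {f : Fin n → Fin (n-r) //
        Function.Surjective f ∧
        ∀ i j : Fin n, (j : ℕ) = (i : ℕ) + 1 →
          (((i : ℕ) % 2 = 0 → f j < f i) ∧ ((i : ℕ) % 2 = 1 → f i < f j))}
      = ∑ m ∈ Finset.range (n-1), Nat.choose m r * sSwap n m := by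
  refine (Nat.card_eq_of_bijective (zigzagOfSwaps (n := n) (r := r))
    ⟨zigzagOfSwaps_injective, zigzagOfSwaps_surjective (by omega)⟩).symm.trans ?_
  rw [Nat.card_sigma, ← sum_choose_swapStat hn r]
  simp only [Nat.card_eq_finsetCard, card_powersetCard, swapStat_eq_card_swapSet]
end
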